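/- arXiv:2001.03013 — 7 statements merged into one kernel-verified Lean document; each statement's English description precedes it below -/
import Mathlib

section
/- Let x₁ < x₂ < ... < xₙ be points in the open interval (y₁, y₂) with r ≥ 1 and c ∈ (0,1), and let M_c = y₁ + c(y₂ - y₁). Define N(x,r,c) = (y₁, min(y₂, y₁ + r(x - y₁))) for x ∈ (y₁, M_c) and N(x,r,c) = (max(y₁, y₂ - r(y₂ - x)), y₂) for x ∈ (M_c, y₂). Then the set Γ₁ = {z ∈ (y₁,y₂) : {x₁,...,xₙ} ⊆ N(z,r,c)} equals ((xₙ + y₁(r-1))/r, M_c] ∪ [M_c, (x₁ + y₂(r-1))/r) intersected with (y₁,y₂), with the convention that intervals (a,b], [a,b) are empty when a ≥ b. -/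
open Set

/-- For a nonempty finite set `A ⊆ (y₁,y₂)` of points, `r ≥ 1`, `c ∈ (0,1)` and
`M_c = y₁ + c(y₂-y₁)`, the Γ₁-region
`{z ∈ (y₁,y₂) : A ⊆ N(z,r,c)}` (with the convention that at `z = M_c` either defining branch
of the proximity region may be used) equals
`((max A + y₁(r-1))/r, M_c] ∪ [M_c, (min A + y₂(r-1))/r)` intersected with `(y₁,y₂)`. -/
theorem picd_Gamma1_region (y₁ y₂ r c : ℝ) (hy : y₁ < y₂) (hr : 1 ≤ r)
    (hc : c ∈ Set.Ioo (0:ℝ) 1) (A : Finset ℝ) (hA : A.Nonempty)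
    (hAsub : (A : Set ℝ) ⊆ Set.Ioo y₁ y₂) :
    {z ∈ Set.Ioo y₁ y₂ |
        (z ≤ y₁ + c * (y₂ - y₁) ∧
          (A : Set ℝ) ⊆ Set.Ioo y₁ (min y₂ (y₁ + r * (z - y₁)))) ∨
        (y₁ + c * (y₂ - y₁) ≤ z ∧
          (A : Set ℝ) ⊆ Set.Ioo (max y₁ (y₂ - r * (y₂ - z))) y₂)} =
      (Set.Ioc ((A.max' hA + y₁ * (r - 1)) / r) (y₁ + c * (y₂ - y₁)) ∪
        Set.Ico (y₁ + c * (y₂ - y₁)) ((A.min' hA + y₂ * (r - 1)) / r)) ∩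
        Set.Ioo y₁ y₂ := by
  have hr0 : (0:ℝ) < r := lt_of_lt_of_le one_pos hr
  ext z
  simp only [mem_setOf_eq, mem_inter_iff, mem_union, mem_Ioc, mem_Ico, mem_Ioo]
  constructor
  · rintro ⟨hz, h⟩
    refine ⟨?_, hz⟩
    rcases h with ⟨hle, hsub⟩ | ⟨hge, hsub⟩
    · left
      refine ⟨?_, hle⟩
      have hmem := hsub (Finset.mem_coe.mpr (A.max'_mem hA))
      have hlt : A.max' hA < y₁ + r * (z - y₁) :=
        lt_of_lt_of_le hmem.2 (min_le_right _ _)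
      rw [div_lt_iff₀ hr0]; nlinarith
    · right
      refine ⟨hge, ?_⟩
      have hmem := hsub (Finset.mem_coe.mpr (A.min'_mem hA))
      have hlt : y₂ - r * (y₂ - z) < A.min' hA :=
        lt_of_le_of_lt (le_max_right _ _) hmem.1
      rw [lt_div_iff₀ hr0]; nlinarith
  · rintro ⟨h, hz⟩
    refine ⟨hz, ?_⟩
    rcases h with ⟨hl, hle⟩ | ⟨hge, hu⟩
    · left
      refine ⟨hle, fun x hx => ?_⟩
      have hx12 := hAsub hx
      refine ⟨hx12.1, lt_min hx12.2 ?_⟩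
      have hmax := Finset.le_max' A x (Finset.mem_coe.mp hx)
      rw [div_lt_iff₀ hr0] at hl
      nlinarith
    · right
      refine ⟨hge, fun x hx => ?_⟩
      have hx12 := hAsub hx
      refine ⟨max_lt hx12.1 ?_, hx12.2⟩
      have hmin := Finset.min'_le A x (Finset.mem_coe.mp hx)
      rw [lt_div_iff₀ hr0] at hu
      nlinarith
end

section
/- Let X₁,...,Xₙ be points in (y₁,y₂), n ≥ 1, r ≥ 1, c ∈ (0,1), and consider the digraph D with vertex set {X₁,...,Xₙ} and an arc from Xᵢ to Xⱼ iff Xⱼ ∈ N(Xᵢ,r,c), where N is the parameterized proximity region on (y₁,y₂) with center M_c = y₁ + c(y₂-y₁). If the points X₁,...,Xₙ avoid M_c, then the domination number of D satisfies 1 ≤ γ(D) ≤ 2. -/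
open Set

/-- The parameterized proximity region on the interval `(y₁,y₂)` with expansion parameter `r`
and centrality parameter `c`, splitting at `M_c = y₁ + c(y₂-y₁)`. -/
noncomputable def Nint (y₁ y₂ r c x : ℝ) : Set ℝ :=
  if x < y₁ + c * (y₂ - y₁) then Set.Ioo y₁ (min y₂ (y₁ + r * (x - y₁)))
  else Set.Ioo (max y₁ (y₂ - r * (y₂ - x))) y₂

/-- The domination number of the digraph on vertices `X 0, …, X (n-1)` where `u` dominates
itself and every vertex lying in `N u`. -/
noncomputable def domNum (n : ℕ) (X : Fin n → ℝ) (N : ℝ → Set ℝ) : ℕ :=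
  sInf {k | ∃ S : Finset (Fin n), S.card = k ∧
    ∀ j, ∃ i ∈ S, X j = X i ∨ X j ∈ N (X i)}

/-- For `n ≥ 1` points in `(y₁,y₂)` avoiding the center `M_c`, `r ≥ 1`,
`c ∈ (0,1)`, the domination number of the PICD satisfies `1 ≤ γ ≤ 2`. -/
theorem picd_domNum_le_two (y₁ y₂ r c : ℝ) (n : ℕ) (hn : 1 ≤ n) (hy : y₁ < y₂)
    (hr : 1 ≤ r) (hc : c ∈ Set.Ioo (0:ℝ) 1) (X : Fin n → ℝ)
    (hX : ∀ i, X i ∈ Set.Ioo y₁ y₂) (hM : ∀ i, X i ≠ y₁ + c * (y₂ - y₁)) :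
    1 ≤ domNum n X (Nint y₁ y₂ r c) ∧ domNum n X (Nint y₁ y₂ r c) ≤ 2 := by
  obtain ⟨hc0, hc1⟩ := hc
  set M := y₁ + c * (y₂ - y₁) with hMdef
  set T := {k | ∃ S : Finset (Fin n), S.card = k ∧
    ∀ j, ∃ i ∈ S, X j = X i ∨ X j ∈ Nint y₁ y₂ r c (X i)} with hT
  have hdomL : ∀ iL : Fin n, X iL < M → ∀ j : Fin n, X j ≤ X iL →
      X j = X iL ∨ X j ∈ Nint y₁ y₂ r c (X iL) := by
    intro iL hiL j hj
    rcases eq_or_lt_of_le hj with h | h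
    · exact Or.inl h
    · right
      unfold Nint
      rw [if_pos hiL]
      refine ⟨(hX j).1, lt_min (hX j).2 ?_⟩
      have h1 : X iL ≤ y₁ + r * (X iL - y₁) := by nlinarith [(hX iL).1]
      linarith
  have hdomR : ∀ iR : Fin n, M < X iR → ∀ j : Fin n, X iR ≤ X j →
      X j = X iR ∨ X j ∈ Nint y₁ y₂ r c (X iR) := by
    intro iR hiR j hj
    rcases eq_or_lt_of_le hj with h | h
    · exact Or.inl h.symm
    · right
      unfold Nint
      rw [if_neg (not_lt.2 hiR.le)]
      refine ⟨max_lt (hX j).1 ?_, (hX j).2⟩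
      have h1 : y₂ - r * (y₂ - X iR) ≤ X iR := by nlinarith [(hX iR).2]
      linarith
  set L : Finset (Fin n) := Finset.univ.filter (fun i => X i < M) with hLdef
  set R : Finset (Fin n) := Finset.univ.filter (fun i => M < X i) with hRdef
  have hLR : ∀ j : Fin n, j ∈ L ∨ j ∈ R := by
    intro j
    rcases lt_trichotomy (X j) M with h | h | h
    · exact Or.inl (Finset.mem_filter.2 ⟨Finset.mem_univ _, h⟩)
    · exact absurd h (hM j)
    · exact Or.inr (Finset.mem_filter.2 ⟨Finset.mem_univ _, h⟩)
  -- build a dominating set of size ≤ 2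
  have hex : ∃ k ∈ T, k ≤ 2 := by
    by_cases hL : L.Nonempty
    · obtain ⟨iL, hiL, hiLmax⟩ := L.exists_max_image X hL
      have hiLlt : X iL < M := (Finset.mem_filter.1 hiL).2
      by_cases hR : R.Nonempty
      · obtain ⟨iR, hiR, hiRmin⟩ := R.exists_min_image X hR
        have hiRgt : M < X iR := (Finset.mem_filter.1 hiR).2
        refine ⟨({iL, iR} : Finset (Fin n)).card, ⟨{iL, iR}, rfl, ?_⟩, ?_⟩
        · intro j
          rcases hLR j with hj | hj
          · exact ⟨iL, by simp, hdomL iL hiLlt j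
              (hiLmax j hj)⟩
          · exact ⟨iR, by simp, hdomR iR hiRgt j (hiRmin j hj)⟩
        · exact le_trans (Finset.card_insert_le _ _) (by simp)
      · refine ⟨1, ⟨{iL}, rfl, ?_⟩, one_le_two⟩
        intro j
        rcases hLR j with hj | hj
        · exact ⟨iL, Finset.mem_singleton_self _, hdomL iL hiLlt j (hiLmax j hj)⟩
        · exact absurd ⟨j, hj⟩ hR
    · have hR : R.Nonempty := by
        rcases hLR ⟨0, hn⟩ with hj | hj
        · exact absurd ⟨_, hj⟩ hL
        · exact ⟨_, hj⟩
      obtain ⟨iR, hiR, hiRmin⟩ := R.exists_min_image X hR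
      have hiRgt : M < X iR := (Finset.mem_filter.1 hiR).2
      refine ⟨1, ⟨{iR}, rfl, ?_⟩, one_le_two⟩
      intro j
      rcases hLR j with hj | hj
      · exact absurd ⟨j, hj⟩ hL
      · exact ⟨iR, Finset.mem_singleton_self _, hdomR iR hiRgt j (hiRmin j hj)⟩
  obtain ⟨k, hkT, hk2⟩ := hex
  constructor
  · rw [Nat.one_le_iff_ne_zero, domNum]
    intro h0
    rcases (Nat.sInf_eq_zero.1 h0) with h | h
    · obtain ⟨S, hScard, hSdom⟩ := h
      obtain ⟨i, hi, -⟩ := hSdom ⟨0, hn⟩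
      rw [Finset.card_eq_zero.1 hScard] at hi
      exact absurd hi (Finset.notMem_empty _)
    · rw [hT, h] at hkT; exact hkT
  · exact le_trans (Nat.sInf_le hkT) hk2
end

section
/- With notation as above, if all points X₁,...,Xₙ lie in (y₁, M_c) or all lie in (M_c, y₂), then the domination number of the PICD with r = 1 equals 1; if both (y₁,M_c) and (M_c,y₂) contain at least one point, then the domination number of the PICD with r = 1 equals 2. In particular, for r = 1 the vertex closest to M_c from the left together with the vertex closest to M_c from the right forms a dominating set. -/
open Set

lemma sInf_eq_one' {S : Set ℕ} (h1 : 1 ∈ S) (h0 : 0 ∉ S) : sInf S = 1 :=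
  le_antisymm (Nat.sInf_le h1)
    (Nat.one_le_iff_ne_zero.2 fun h => h0 (h ▸ Nat.sInf_mem ⟨1, h1⟩))

lemma sInf_eq_two' {S : Set ℕ} (h2 : 2 ∈ S) (h1 : 1 ∉ S) (h0 : 0 ∉ S) : sInf S = 2 := by
  have hmem := Nat.sInf_mem (⟨2, h2⟩ : S.Nonempty)
  have hle := Nat.sInf_le h2
  interval_cases h : (sInf S)
  · exact absurd (h ▸ hmem) h0
  · exact absurd (h ▸ hmem) h1
  · rfl

lemma Nint_left {y₁ y₂ c x : ℝ} (h : x < y₁ + c * (y₂ - y₁)) (hx : x ≤ y₂) :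
    Nint y₁ y₂ 1 c x = Set.Ioo y₁ x := by
  unfold Nint
  rw [if_pos h]
  rw [one_mul]
  have : y₁ + (x - y₁) = x := by ring
  rw [this, min_eq_right hx]

lemma Nint_right {y₁ y₂ c x : ℝ} (h : ¬ x < y₁ + c * (y₂ - y₁)) (hx : y₁ ≤ x) :
    Nint y₁ y₂ 1 c x = Set.Ioo x y₂ := by
  unfold Nint
  rw [if_neg h]
  rw [one_mul]
  have : y₂ - (y₂ - x) = x := by ring
  rw [this, max_eq_right hx]

/-- For `r = 1`: if all points lie on one side of `M_c` the domination number is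
`1`; if both sides of `M_c` contain points it is `2`, and the vertex closest to `M_c` from the
left together with the vertex closest to `M_c` from the right forms a dominating set. -/
theorem picd_domNum_r_eq_one (y₁ y₂ c : ℝ) (n : ℕ) (hn : 1 ≤ n) (hy : y₁ < y₂)
    (hc : c ∈ Set.Ioo (0:ℝ) 1) (X : Fin n → ℝ)
    (hX : ∀ i, X i ∈ Set.Ioo y₁ y₂) (hM : ∀ i, X i ≠ y₁ + c * (y₂ - y₁)) :
    (((∀ i, X i < y₁ + c * (y₂ - y₁)) ∨ (∀ i, y₁ + c * (y₂ - y₁) < X i)) →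
        domNum n X (Nint y₁ y₂ 1 c) = 1) ∧
    ((∃ i, X i < y₁ + c * (y₂ - y₁)) → (∃ j, y₁ + c * (y₂ - y₁) < X j) →
        domNum n X (Nint y₁ y₂ 1 c) = 2 ∧
        ∀ i j, X i < y₁ + c * (y₂ - y₁) →
          (∀ k, X k < y₁ + c * (y₂ - y₁) → X k ≤ X i) →
          y₁ + c * (y₂ - y₁) < X j →
          (∀ k, y₁ + c * (y₂ - y₁) < X k → X j ≤ X k) →
          ∀ k, (X k = X i ∨ X k ∈ Nint y₁ y₂ 1 c (X i)) ∨
               (X k = X j ∨ X k ∈ Nint y₁ y₂ 1 c (X j))) := by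
  unfold domNum
  set M := y₁ + c * (y₂ - y₁) with hMdef
  have hne : Nonempty (Fin n) := ⟨⟨0, hn⟩⟩
  have h0 : (0 : ℕ) ∉ {k | ∃ S : Finset (Fin n), S.card = k ∧
      ∀ j, ∃ i ∈ S, X j = X i ∨ X j ∈ Nint y₁ y₂ 1 c (X i)} := by
    rintro ⟨S, hS, hdom⟩
    obtain ⟨i, hi, -⟩ := hdom ⟨0, hn⟩
    rw [Finset.card_eq_zero] at hS
    simp [hS] at hi
  constructor
  · rintro (h | h)
    · -- all on left
      obtain ⟨i₀, -, hmax⟩ := Finset.exists_max_image Finset.univ X ⟨⟨0, hn⟩, Finset.mem_univ _⟩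
      have h1 : (1 : ℕ) ∈ {k | ∃ S : Finset (Fin n), S.card = k ∧
          ∀ j, ∃ i ∈ S, X j = X i ∨ X j ∈ Nint y₁ y₂ 1 c (X i)} := by
        refine ⟨{i₀}, Finset.card_singleton _, fun j => ⟨i₀, Finset.mem_singleton_self _, ?_⟩⟩
        rcases eq_or_lt_of_le (hmax j (Finset.mem_univ j)) with he | hlt
        · exact Or.inl he
        · right
          rw [Nint_left (h i₀) (hX i₀).2.le]
          exact ⟨(hX j).1, hlt⟩
      exact sInf_eq_one' h1 h0
    · -- all on right
      obtain ⟨i₀, -, hmin⟩ := Finset.exists_min_image Finset.univ X ⟨⟨0, hn⟩, Finset.mem_univ _⟩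
      have h1 : (1 : ℕ) ∈ {k | ∃ S : Finset (Fin n), S.card = k ∧
          ∀ j, ∃ i ∈ S, X j = X i ∨ X j ∈ Nint y₁ y₂ 1 c (X i)} := by
        refine ⟨{i₀}, Finset.card_singleton _, fun j => ⟨i₀, Finset.mem_singleton_self _, ?_⟩⟩
        rcases eq_or_lt_of_le (hmin j (Finset.mem_univ j)) with he | hlt
        · exact Or.inl he.symm
        · right
          rw [Nint_right (not_lt.2 (h i₀).le) (hX i₀).1.le]
          exact ⟨hlt, (hX j).2⟩
      exact sInf_eq_one' h1 h0
  · rintro ⟨a, ha⟩ ⟨b, hb⟩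
    -- key domination fact
    have key : ∀ i j, X i < M → (∀ k, X k < M → X k ≤ X i) → M < X j →
        (∀ k, M < X k → X j ≤ X k) →
        ∀ k, (X k = X i ∨ X k ∈ Nint y₁ y₂ 1 c (X i)) ∨
             (X k = X j ∨ X k ∈ Nint y₁ y₂ 1 c (X j)) := by
      intro i j hi hmax hj hmin k
      rcases lt_or_gt_of_ne (hM k) with hk | hk
      · left
        rcases eq_or_lt_of_le (hmax k hk) with he | hlt
        · exact Or.inl he
        · right
          rw [Nint_left hi (hX i).2.le]
          exact ⟨(hX k).1, hlt⟩
      · right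
        rcases eq_or_lt_of_le (hmin k hk) with he | hlt
        · exact Or.inl he.symm
        · right
          rw [Nint_right (not_lt.2 hj.le) (hX j).1.le]
          exact ⟨hlt, (hX k).2⟩
    refine ⟨?_, key⟩
    -- build extremal i j
    obtain ⟨i₀, hi₀mem, hmax⟩ := Finset.exists_max_image (Finset.univ.filter (fun k => X k < M)) X
      ⟨a, by simp [ha]⟩
    obtain ⟨j₀, hj₀mem, hmin⟩ := Finset.exists_min_image (Finset.univ.filter (fun k => M < X k)) X
      ⟨b, by simp [hb]⟩
    simp only [Finset.mem_filter, Finset.mem_univ, true_and] at hi₀mem hj₀mem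
    have hmax' : ∀ k, X k < M → X k ≤ X i₀ := fun k hk => hmax k (by simp [hk])
    have hmin' : ∀ k, M < X k → X j₀ ≤ X k := fun k hk => hmin k (by simp [hk])
    have hij : i₀ ≠ j₀ := fun he => absurd (he ▸ hi₀mem) (not_lt.2 hj₀mem.le)
    have h2 : (2 : ℕ) ∈ {k | ∃ S : Finset (Fin n), S.card = k ∧
        ∀ j, ∃ i ∈ S, X j = X i ∨ X j ∈ Nint y₁ y₂ 1 c (X i)} := by
      refine ⟨{i₀, j₀}, by rw [Finset.card_insert_of_notMem (by simp [hij]),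
        Finset.card_singleton], fun k => ?_⟩
      rcases key i₀ j₀ hi₀mem hmax' hj₀mem hmin' k with h | h
      · exact ⟨i₀, by simp, h⟩
      · exact ⟨j₀, by simp, h⟩
    have h1 : (1 : ℕ) ∉ {k | ∃ S : Finset (Fin n), S.card = k ∧
        ∀ j, ∃ i ∈ S, X j = X i ∨ X j ∈ Nint y₁ y₂ 1 c (X i)} := by
      rintro ⟨S, hS, hdom⟩
      obtain ⟨u, rfl⟩ := Finset.card_eq_one.mp hS
      rcases lt_or_gt_of_ne (hM u) with hu | hu
      · obtain ⟨i, hi, hcov⟩ := hdom b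
        rw [Finset.mem_singleton] at hi
        subst hi
        rcases hcov with he | hmem
        · exact absurd (he ▸ hb) (not_lt.2 hu.le)
        · rw [Nint_left hu (hX i).2.le] at hmem
          exact absurd hb (not_lt.2 (hmem.2.le.trans hu.le))
      · obtain ⟨i, hi, hcov⟩ := hdom a
        rw [Finset.mem_singleton] at hi
        subst hi
        rcases hcov with he | hmem
        · exact absurd (he ▸ ha) (not_lt.2 hu.le)
        · rw [Nint_right (not_lt.2 hu.le) (hX i).1.le] at hmem
          exact absurd ha (not_lt.2 (hu.le.trans hmem.1.le))
    exact sInf_eq_two' h2 h1 h0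
end

section
/- Let X₁,...,Xₙ (n ≥ 1) be i.i.d. uniform on (0,1) and let γ be the domination number of the PICD with parameters r = 2 and c = 1/2. Then P(γ = 2) = 4/9 - (16/9)·4^{-n} and P(γ = 1) = 5/9 + (16/9)·4^{-n}. -/
/-!
For points of `(0,1)`, `y` lies in `N(x,2,1/2)` or equals `x` exactly when `y < 2x < 1 + y`. Hence
the largest point below `1/2` and the smallest point above it always dominate, so `γ ∈ {1, 2}`,
and `γ = 1` iff some point lies in `(max/2, (1 + min)/2)`. Almost surely the points are
distinct; then `γ = 2` iff, writing `s` and `t` for the minimum and maximum, `2s ≤ t`,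
`s ≤ 2t - 1`, and the other `n - 2` points avoid `(t/2, (1+s)/2)`, i.e. lie in a set of length
`(3(t - s) - 1)/2`. Summing over the `n(n-1)` choices of the indices of the minimum and
maximum,
`P(γ = 2) = n(n-1) ∫∫ ((3(t-s)-1)/2)^(n-2) ds dt = 4/9 - (16/9)·4⁻ⁿ`.
-/

open Set MeasureTheory

/-- The parameterized proximity region on `(0,1)`: `N(x,r,c) = (0, min(1, r·x))` for `x < c`
and `(max(0, 1 - r(1-x)), 1)` for `x > c`. -/
noncomputable def N01 (r c x : ℝ) : Set ℝ :=
  if x < c then Set.Ioo 0 (min 1 (r * x)) else Set.Ioo (max 0 (1 - r * (1 - x))) 1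

/-- The joint law of `n` i.i.d. uniform random variables on `(0,1)`. -/
noncomputable def unifPi (n : ℕ) : Measure (Fin n → ℝ) :=
  Measure.pi fun _ => volume.restrict (Set.Ioo (0:ℝ) 1)

section DominationNumber

variable {n : ℕ} {X : Fin n → ℝ} {N : ℝ → Set ℝ}

theorem domNum_le_card {S : Finset (Fin n)} (hS : ∀ j, ∃ i ∈ S, X j = X i ∨ X j ∈ N (X i)) :
    domNum n X N ≤ S.card :=
  Nat.sInf_le ⟨S, rfl, hS⟩

theorem exists_card_eq_domNum :
    ∃ S : Finset (Fin n), S.card = domNum n X N ∧ ∀ j, ∃ i ∈ S, X j = X i ∨ X j ∈ N (X i) :=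
  Nat.sInf_mem (s := {k | ∃ S : Finset (Fin n), S.card = k ∧
      ∀ j, ∃ i ∈ S, X j = X i ∨ X j ∈ N (X i)})
    ⟨n, Finset.univ, Finset.card_fin n, fun j => ⟨j, Finset.mem_univ j, Or.inl rfl⟩⟩

theorem domNum_pos (hn : n ≠ 0) : 0 < domNum n X N := by
  obtain ⟨S, hcard, hS⟩ := exists_card_eq_domNum (X := X) (N := N)
  obtain ⟨i, hi, -⟩ := hS ⟨0, Nat.pos_of_ne_zero hn⟩
  exact hcard ▸ Finset.card_pos.mpr ⟨i, hi⟩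

theorem domNum_eq_one_iff (hn : n ≠ 0) :
    domNum n X N = 1 ↔ ∃ i, ∀ j, X j = X i ∨ X j ∈ N (X i) := by
  constructor
  · intro h
    obtain ⟨S, hcard, hS⟩ := exists_card_eq_domNum (X := X) (N := N)
    obtain ⟨i, rfl⟩ := Finset.card_eq_one.mp (hcard.trans h)
    exact ⟨i, fun j => by simpa using hS j⟩
  · rintro ⟨i, hi⟩
    have hle := domNum_le_card (S := {i}) fun j => ⟨i, Finset.mem_singleton_self i, hi j⟩
    have hpos := domNum_pos (X := X) (N := N) hn
    rw [Finset.card_singleton] at hle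
    omega

end DominationNumber

theorem domNum_fin_one (X : Fin 1 → ℝ) (N : ℝ → Set ℝ) : domNum 1 X N = 1 :=
  (domNum_eq_one_iff one_ne_zero).2 ⟨0, fun j => Or.inl (congrArg X (Subsingleton.elim j 0))⟩

theorem eq_or_mem_N01_iff {x y : ℝ} (hx : x ∈ Ioo 0 1) (hy : y ∈ Ioo 0 1) :
    y = x ∨ y ∈ N01 2 (1 / 2) x ↔ y < 2 * x ∧ 2 * x < 1 + y := by
  obtain ⟨hx0, hx1⟩ := hx
  obtain ⟨hy0, hy1⟩ := hy
  unfold N01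
  split_ifs with h
  · simp only [mem_Ioo, lt_min_iff]
    constructor
    · rintro (rfl | ⟨-, -, h'⟩) <;> constructor <;> linarith
    · rintro ⟨h1, -⟩; exact Or.inr ⟨hy0, hy1, h1⟩
  · simp only [mem_Ioo, max_lt_iff]
    constructor
    · rintro (rfl | ⟨⟨-, h'⟩, -⟩) <;> constructor <;> linarith
    · rintro ⟨-, h2⟩; exact Or.inr ⟨⟨hy0, by linarith⟩, hy1⟩

section UnitInterval

variable {n : ℕ} {X : Fin n → ℝ}

theorem exists_forall_lt_half_dominated (hn : n ≠ 0) (hX : ∀ j, X j ∈ Ioo 0 1) :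
    ∃ i, ∀ j, X j < 1 / 2 → X j < 2 * X i ∧ 2 * X i < 1 + X j := by
  by_cases hL : ∃ j, X j < 1 / 2
  · obtain ⟨i, hi, hmax⟩ := (Finset.univ.filter (X · < 1 / 2)).exists_max_image X
      (by simpa [Finset.filter_nonempty_iff] using hL)
    refine ⟨i, fun j hj => ?_⟩
    have hji := hmax j (by simpa using hj)
    have hi := (Finset.mem_filter.1 hi).2
    constructor <;> linarith [(hX i).1, (hX j).1]
  · push Not at hL
    exact ⟨⟨0, Nat.pos_of_ne_zero hn⟩, fun j hj => absurd hj (not_lt.mpr (hL j))⟩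

theorem exists_forall_half_le_dominated (hn : n ≠ 0) (hX : ∀ j, X j ∈ Ioo 0 1) :
    ∃ k, ∀ j, 1 / 2 ≤ X j → X j < 2 * X k ∧ 2 * X k < 1 + X j := by
  by_cases hR : ∃ j, 1 / 2 ≤ X j
  · obtain ⟨k, hk, hmin⟩ := (Finset.univ.filter (1 / 2 ≤ X ·)).exists_min_image X
      (by simpa [Finset.filter_nonempty_iff] using hR)
    refine ⟨k, fun j hj => ?_⟩
    have hkj := hmin j (by simpa using hj)
    have hk := (Finset.mem_filter.1 hk).2
    constructor <;> linarith [(hX k).2, (hX j).2]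
  · push Not at hR
    exact ⟨⟨0, Nat.pos_of_ne_zero hn⟩, fun j hj => absurd hj (not_le.mpr (hR j))⟩

theorem domNum_N01_le_two (hn : n ≠ 0) (hX : ∀ j, X j ∈ Ioo 0 1) :
    domNum n X (N01 2 (1 / 2)) ≤ 2 := by
  obtain ⟨i, hi⟩ := exists_forall_lt_half_dominated hn hX
  obtain ⟨k, hk⟩ := exists_forall_half_le_dominated hn hX
  refine (domNum_le_card (S := {i, k}) fun j => ?_).trans Finset.card_le_two
  rcases lt_or_ge (X j) (1 / 2) with h | h
  · exact ⟨i, by simp, (eq_or_mem_N01_iff (hX i) (hX j)).mpr (hi j h)⟩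
  · exact ⟨k, by simp, (eq_or_mem_N01_iff (hX k) (hX j)).mpr (hk j h)⟩

theorem domNum_N01_eq_one_iff (hn : n ≠ 0) (hX : ∀ j, X j ∈ Ioo 0 1) :
    domNum n X (N01 2 (1 / 2)) = 1 ↔ ∃ i, ∀ j, X j < 2 * X i ∧ 2 * X i < 1 + X j := by
  simp_rw [domNum_eq_one_iff hn, eq_or_mem_N01_iff (hX _) (hX _)]

theorem domNum_N01_eq_two_iff (hn : n ≠ 0) (hX : ∀ j, X j ∈ Ioo 0 1) :
    domNum n X (N01 2 (1 / 2)) = 2 ↔ ¬ ∃ i, ∀ j, X j < 2 * X i ∧ 2 * X i < 1 + X j := by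
  rw [← domNum_N01_eq_one_iff hn hX]
  have := domNum_pos (X := X) (N := N01 2 (1 / 2)) hn
  have := domNum_N01_le_two hn hX
  omega

end UnitInterval

section PiMarginals

variable {α : Type*} [MeasurableSpace α] (μ : Measure α) [SigmaFinite μ] {m : ℕ}

theorem measure_pi_setOf_succAbove_mem (i : Fin (m + 1)) {S : Set (α × (Fin m → α))}
    (hS : MeasurableSet S) :
    Measure.pi (fun _ => μ) {X : Fin (m + 1) → α | (X i, fun j => X (i.succAbove j)) ∈ S} =
      ∫⁻ a, Measure.pi (fun _ => μ) {Y | (a, Y) ∈ S} ∂μ := by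
  rw [show {X : Fin (m + 1) → α | (X i, fun j => X (i.succAbove j)) ∈ S} =
      MeasurableEquiv.piFinSuccAbove (fun _ : Fin (m + 1) => α) i ⁻¹' S from rfl,
    (measurePreserving_piFinSuccAbove (fun _ => μ) i).measure_preimage hS.nullMeasurableSet,
    Measure.prod_apply hS]
  rfl

theorem measure_pi_setOf_forall_succAbove (k : Fin (m + 1)) {T : Set α} (hT : MeasurableSet T)
    {W : Set (α × α)} (hW : MeasurableSet W) :
    Measure.pi (fun _ => μ) {Y | Y k ∈ T ∧ ∀ j, (Y k, Y (k.succAbove j)) ∈ W} =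
      ∫⁻ b in T, μ {c | (b, c) ∈ W} ^ m ∂μ := by
  have hS : MeasurableSet {p : α × (Fin m → α) | p.1 ∈ T ∧ ∀ j, (p.1, p.2 j) ∈ W} := by
    measurability
  refine (measure_pi_setOf_succAbove_mem μ k hS).trans ?_
  rw [← lintegral_indicator hT]
  congr 1 with b
  by_cases hb : b ∈ T
  · have hbox : {Y : Fin m → α | ∀ j, (b, Y j) ∈ W} = univ.pi fun _ => {c | (b, c) ∈ W} := by
      ext; simp
    simp [hb, hbox, Measure.pi_pi]
  · simp [hb]

theorem measure_pi_setOf_forall_ne_ne {i k : Fin (m + 2)} (hik : i ≠ k) {R : Set (α × α)}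
    (hR : MeasurableSet R) {V : Set (α × α × α)} (hV : MeasurableSet V) :
    Measure.pi (fun _ => μ) {X | (X i, X k) ∈ R ∧ ∀ j, j ≠ i → j ≠ k → (X i, X k, X j) ∈ V} =
      ∫⁻ a, ∫⁻ b in {b | (a, b) ∈ R}, μ {c | (a, b, c) ∈ V} ^ m ∂μ ∂μ := by
  obtain ⟨k, rfl⟩ := Fin.exists_succAbove_eq hik.symm
  have hS : MeasurableSet {p : α × (Fin (m + 1) → α) |
      (p.1, p.2 k) ∈ R ∧ ∀ j, j ≠ k → (p.1, p.2 k, p.2 j) ∈ V} := by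
    measurability
  have hset : {X : Fin (m + 2) → α | (X i, X (i.succAbove k)) ∈ R ∧
      ∀ j, j ≠ i → j ≠ i.succAbove k → (X i, X (i.succAbove k), X j) ∈ V} =
      {X | (X i, fun j => X (i.succAbove j)) ∈ {p : α × (Fin (m + 1) → α) |
        (p.1, p.2 k) ∈ R ∧ ∀ j, j ≠ k → (p.1, p.2 k, p.2 j) ∈ V}} := by
    ext X
    simp [Fin.forall_iff_succAbove i]
  rw [hset, measure_pi_setOf_succAbove_mem μ i hS]
  congr 1 with a
  calc _ = Measure.pi (fun _ => μ)
        {Y | Y k ∈ Prod.mk a ⁻¹' R ∧ ∀ j, (Y k, Y (k.succAbove j)) ∈ Prod.mk a ⁻¹' V} := by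
        congr 1
        ext Y
        simp [Fin.forall_iff_succAbove k]
    _ = _ := measure_pi_setOf_forall_succAbove μ k (measurable_prodMk_left hR)
      (measurable_prodMk_left hV)

theorem measure_pi_setOf_apply_eq_apply [MeasurableEq α] [NullSingletonClass μ]
    {i k : Fin (m + 1)} (hik : i ≠ k) :
    Measure.pi (fun _ => μ) {X | X i = X k} = 0 := by
  obtain ⟨k, rfl⟩ := Fin.exists_succAbove_eq hik.symm
  have hS : MeasurableSet {p : α × (Fin m → α) | p.1 = p.2 k} :=
    measurableSet_eq_fun measurable_fst ((measurable_pi_apply k).comp measurable_snd)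
  have hslice (a : α) : Measure.pi (fun _ => μ) {Y : Fin m → α | a = Y k} = 0 := by
    simpa only [eq_comm] using Measure.pi_hyperplane (fun _ => μ) k a
  exact (measure_pi_setOf_succAbove_mem μ i hS).trans (by simp [hslice])

theorem ae_injective_pi [MeasurableEq α] [NullSingletonClass μ] {n : ℕ} :
    ∀ᵐ X ∂Measure.pi (fun _ : Fin n => μ), Function.Injective X := by
  rcases n with _ | m
  · exact ae_of_all _ fun X => Function.injective_of_subsingleton X
  have hne (i k : Fin (m + 1)) : ∀ᵐ X ∂Measure.pi (fun _ => μ), i ≠ k → X i ≠ X k := by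
    by_cases hik : i = k
    · exact ae_of_all _ fun _ h => absurd hik h
    · exact ae_iff.2 (by simpa [hik] using measure_pi_setOf_apply_eq_apply μ hik)
  filter_upwards [ae_all_iff.2 fun i => ae_all_iff.2 (hne i)] with X hX i k hXik
  by_contra hik
  exact hX i k hik hXik

end PiMarginals

theorem ae_unifPi_mem_Ioo (n : ℕ) : ∀ᵐ X ∂unifPi n, ∀ i, X i ∈ Ioo (0 : ℝ) 1 :=
  ae_all_iff.2 fun _ => Measure.tendsto_eval_ae_ae.eventually (ae_restrict_mem measurableSet_Ioo)

instance isProbabilityMeasure_unifPi (n : ℕ) : IsProbabilityMeasure (unifPi n) := by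
  have : IsProbabilityMeasure (volume.restrict (Ioo (0 : ℝ) 1)) := ⟨by simp⟩
  unfold unifPi
  infer_instance

theorem integral_mul_add_pow {a b : ℝ} (A B : ℝ) (hB : B ≠ 0) (m : ℕ) :
    ∫ x in a..b, (B * x + A) ^ m =
      ((B * b + A) ^ (m + 1) - (B * a + A) ^ (m + 1)) / (B * (m + 1)) := by
  rw [intervalIntegral.integral_comp_mul_add (fun x => x ^ m) hB, integral_pow, smul_eq_mul]
  field_simp

theorem setLIntegral_Ioc_ofReal_eq {f : ℝ → ℝ} (hf : Continuous f) {a b : ℝ} (hab : a ≤ b)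
    (hf0 : ∀ x ∈ Ioc a b, 0 ≤ f x) :
    ∫⁻ x in Ioc a b, ENNReal.ofReal (f x) = ENNReal.ofReal (∫ x in a..b, f x) := by
  rw [intervalIntegral.integral_of_le hab, ofReal_integral_eq_lintegral_ofReal
    hf.integrableOn_Ioc ((ae_restrict_iff' measurableSet_Ioc).2 (ae_of_all _ hf0))]

local notation "ν" => volume.restrict (Ioo (0 : ℝ) 1)

/-- Pairs `(t, s)` = (maximum, minimum) such that neither `t` nor `s` has every other point in its
proximity region. -/
def domTwoRegion : Set (ℝ × ℝ) := {p | 2 * p.2 ≤ p.1 ∧ p.2 ≤ 2 * p.1 - 1}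

def domTwoGap : Set (ℝ × ℝ × ℝ) :=
  {p | p.2.2 ∈ Ioo p.2.1 p.1 \ Ioo (p.1 / 2) ((1 + p.2.1) / 2)}

/-- `X i` is the minimum and `X k` the maximum, and no point lies in `(X k / 2, (1 + X i) / 2)`,
the set of points whose proximity region contains every other point. -/
def domTwoEvent {m : ℕ} (i k : Fin (m + 2)) : Set (Fin (m + 2) → ℝ) :=
  {X | (X k, X i) ∈ domTwoRegion ∧ ∀ j, j ≠ k → j ≠ i → (X k, X i, X j) ∈ domTwoGap}

theorem measurableSet_domTwoRegion : MeasurableSet domTwoRegion := by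
  unfold domTwoRegion; measurability

theorem measurableSet_domTwoGap : MeasurableSet domTwoGap := by
  unfold domTwoGap; simp only [mem_sdiff, mem_Ioo]; measurability

theorem lt_of_mem_domTwoRegion {p : ℝ × ℝ} (hp : p ∈ domTwoRegion) : p.2 < p.1 := by
  obtain ⟨h1, h2⟩ := hp
  by_contra h
  linarith [not_lt.1 h]

theorem volume_restrict_domTwoGap {s t : ℝ} (hs : 0 < s) (hst : 2 * s ≤ t) (hts : s ≤ 2 * t - 1)
    (ht : t < 1) :
    ν {x | (t, s, x) ∈ domTwoGap} = ENNReal.ofReal ((3 * (t - s) - 1) / 2) := by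
  have hgap : {x | (t, s, x) ∈ domTwoGap} = Ioo s t \ Ioo (t / 2) ((1 + s) / 2) := rfl
  rw [hgap, Measure.restrict_apply (measurableSet_Ioo.diff measurableSet_Ioo),
    inter_eq_left.2 (sdiff_subset.trans (Ioo_subset_Ioo hs.le ht.le)),
    measure_sdiff (Ioo_subset_Ioo (by linarith) (by linarith))
      measurableSet_Ioo.nullMeasurableSet measure_Ioo_lt_top.ne,
    Real.volume_Ioo, Real.volume_Ioo, ← ENNReal.ofReal_sub _ (by linarith)]
  ring_nf

theorem one_third_le_sub_min_half_two_mul_sub_one (t : ℝ) :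
    1 / 3 ≤ t - min (t / 2) (2 * t - 1) := by
  rcases min_cases (t / 2) (2 * t - 1) with h | h <;> linarith [h.1, h.2]

/-- Closed form of `∫ s in 0..min (t/2) (2t-1), ((3(t-s)-1)/2)^m`, the integral over the minimum
`s` once the maximum is `t`. -/
noncomputable def sliceIntegral (m : ℕ) (t : ℝ) : ℝ :=
  (((3 * t - 1) / 2) ^ (m + 1) - ((3 * (t - min (t / 2) (2 * t - 1)) - 1) / 2) ^ (m + 1)) /
    (3 / 2 * (m + 1))

theorem continuous_sliceIntegral (m : ℕ) : Continuous (sliceIntegral m) := by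
  unfold sliceIntegral; fun_prop

theorem sliceIntegral_nonneg (m : ℕ) {t : ℝ} (ht : 1 / 2 ≤ t) : 0 ≤ sliceIntegral m t := by
  have hc : 0 ≤ min (t / 2) (2 * t - 1) := le_min (by linarith) (by linarith)
  have htc := one_third_le_sub_min_half_two_mul_sub_one t
  exact div_nonneg (sub_nonneg.2 (pow_le_pow_left₀ (by linarith) (by linarith) _)) (by positivity)

theorem lintegral_domTwoRegion_slice_of_le {t : ℝ} (ht : t ≤ 1 / 2) (m : ℕ) :
    ∫⁻ s in {s | (t, s) ∈ domTwoRegion}, ν {x | (t, s, x) ∈ domTwoGap} ^ m ∂ν = 0 := by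
  have hslice : {s | (t, s) ∈ domTwoRegion} ∩ Ioo 0 1 = ∅ := by
    ext s
    simp only [domTwoRegion, mem_inter_iff, mem_ofPred_eq, mem_Ioo, mem_empty_iff_false, iff_false]
    rintro ⟨⟨-, h⟩, h0, -⟩
    linarith
  rw [Measure.restrict_restrict (s := {s | (t, s) ∈ domTwoRegion})
    (measurable_prodMk_left measurableSet_domTwoRegion), hslice, Measure.restrict_empty,
    lintegral_zero_measure]

theorem lintegral_domTwoRegion_slice {t : ℝ} (ht : t ∈ Ioo (1 / 2) 1) (m : ℕ) :
    ∫⁻ s in {s | (t, s) ∈ domTwoRegion},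
      ν {x | (t, s, x) ∈ domTwoGap} ^ m ∂ν = ENNReal.ofReal (sliceIntegral m t) := by
  obtain ⟨ht0, ht1⟩ := ht
  set c := min (t / 2) (2 * t - 1) with hc
  have hc0 : 0 < c := lt_min (by linarith) (by linarith)
  have hct : c ≤ t / 2 := min_le_left _ _
  have hct' : c ≤ 2 * t - 1 := min_le_right _ _
  have hslice : {s | (t, s) ∈ domTwoRegion} ∩ Ioo 0 1 = Ioc 0 c := by
    ext s
    simp only [domTwoRegion, mem_inter_iff, mem_ofPred_eq, mem_Ioo, mem_Ioc, hc, le_min_iff]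
    constructor
    · rintro ⟨⟨h1, h2⟩, h3, -⟩; exact ⟨h3, by linarith, h2⟩
    · rintro ⟨h3, h1, h2⟩; exact ⟨⟨by linarith, h2⟩, h3, by linarith⟩
  have hnonneg : ∀ s ∈ Ioc 0 c, 0 ≤ (3 * (t - s) - 1) / 2 := by
    have htc := one_third_le_sub_min_half_two_mul_sub_one t
    intro s hs
    linarith [hs.2]
  rw [Measure.restrict_restrict (s := {s | (t, s) ∈ domTwoRegion})
      (measurable_prodMk_left measurableSet_domTwoRegion), hslice,
    setLIntegral_congr_fun measurableSet_Ioc fun s hs => by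
      rw [volume_restrict_domTwoGap hs.1 (by linarith [hs.2]) (by linarith [hs.2]) ht1,
        ← ENNReal.ofReal_pow (hnonneg s hs)],
    setLIntegral_Ioc_ofReal_eq (by fun_prop) hc0.le fun s hs => pow_nonneg (hnonneg s hs) m]
  congr 1
  rw [intervalIntegral.integral_congr (g := fun s => (-(3 / 2) * s + (3 * t - 1) / 2) ^ m)
    fun s _ => by ring_nf, integral_mul_add_pow _ _ (by norm_num), sliceIntegral, ← hc,
    show -(3 / 2) * c + (3 * t - 1) / 2 = (3 * (t - c) - 1) / 2 by ring,
    show -(3 / 2) * (0 : ℝ) + (3 * t - 1) / 2 = (3 * t - 1) / 2 by ring,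
    neg_mul, div_neg, ← neg_div, neg_sub]

theorem integral_sliceIntegral (m : ℕ) :
    ∫ t in (1 / 2 : ℝ)..1, sliceIntegral m t =
      4 * (1 - 4 * (1 / 4) ^ (m + 2)) / (9 * (m + 1) * (m + 2)) := by
  have hint (a b : ℝ) : IntervalIntegrable (sliceIntegral m) volume a b :=
    (continuous_sliceIntegral m).intervalIntegrable a b
  rw [← intervalIntegral.integral_add_adjacent_intervals (hint _ (2 / 3)) (hint _ _)]
  have hleft : ∫ t in (1 / 2 : ℝ)..(2 / 3), sliceIntegral m t =
      ((∫ t in (1 / 2 : ℝ)..(2 / 3), (3 / 2 * t + -1 / 2) ^ (m + 1)) -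
        ∫ t in (1 / 2 : ℝ)..(2 / 3), (-(3 / 2) * t + 1) ^ (m + 1)) / (3 / 2 * (m + 1)) := by
    rw [← intervalIntegral.integral_sub (Continuous.intervalIntegrable (by fun_prop) _ _)
      (Continuous.intervalIntegrable (by fun_prop) _ _), ← intervalIntegral.integral_div]
    refine intervalIntegral.integral_congr fun t ht => ?_
    rw [uIcc_of_le (by norm_num)] at ht
    rw [sliceIntegral, min_eq_right (by linarith [ht.2])]
    ring_nf
  have hright : ∫ t in (2 / 3 : ℝ)..1, sliceIntegral m t =
      ((∫ t in (2 / 3 : ℝ)..1, (3 / 2 * t + -1 / 2) ^ (m + 1)) -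
        ∫ t in (2 / 3 : ℝ)..1, (3 / 4 * t + -1 / 2) ^ (m + 1)) / (3 / 2 * (m + 1)) := by
    rw [← intervalIntegral.integral_sub (Continuous.intervalIntegrable (by fun_prop) _ _)
      (Continuous.intervalIntegrable (by fun_prop) _ _), ← intervalIntegral.integral_div]
    refine intervalIntegral.integral_congr fun t ht => ?_
    rw [uIcc_of_le (by norm_num)] at ht
    rw [sliceIntegral, min_eq_left (by linarith [ht.1])]
    ring_nf
  rw [hleft, hright]
  simp only [integral_mul_add_pow _ _ (by norm_num : (3 / 2 : ℝ) ≠ 0),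
    integral_mul_add_pow _ _ (by norm_num : (3 / 4 : ℝ) ≠ 0),
    integral_mul_add_pow _ _ (by norm_num : -(3 / 2 : ℝ) ≠ 0)]
  norm_num
  field_simp
  ring

theorem lintegral_domTwoRegion (m : ℕ) :
    ∫⁻ t, ∫⁻ s in {s | (t, s) ∈ domTwoRegion},
      ν {x | (t, s, x) ∈ domTwoGap} ^ m ∂ν ∂ν =
      ENNReal.ofReal (4 * (1 - 4 * (1 / 4) ^ (m + 2)) / (9 * (m + 1) * (m + 2))) := by
  have hinner : ∀ t ∈ Ioo (0 : ℝ) 1, ∫⁻ s in {s | (t, s) ∈ domTwoRegion},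
      ν {x | (t, s, x) ∈ domTwoGap} ^ m ∂ν =
      (Ioi (1 / 2)).indicator (fun t => ENNReal.ofReal (sliceIntegral m t)) t := by
    intro t ht
    rcases le_or_gt t (1 / 2) with h | h
    · rw [indicator_of_notMem (show t ∉ Ioi (1 / 2) from not_lt.2 h),
        lintegral_domTwoRegion_slice_of_le h]
    · rw [indicator_of_mem (show t ∈ Ioi (1 / 2) from h), lintegral_domTwoRegion_slice ⟨h, ht.2⟩]
  rw [setLIntegral_congr_fun measurableSet_Ioo hinner, lintegral_indicator measurableSet_Ioi,
    Measure.restrict_restrict measurableSet_Ioi,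
    Ioi_inter_Ioo, max_eq_left (by norm_num),
    Measure.restrict_congr_set Ioo_ae_eq_Ioc,
    setLIntegral_Ioc_ofReal_eq (continuous_sliceIntegral m) (by norm_num)
      fun t ht => sliceIntegral_nonneg m ht.1.le, integral_sliceIntegral]

section DomTwoEvent

variable {m : ℕ} {i k : Fin (m + 2)} {X : Fin (m + 2) → ℝ}

theorem domTwoEvent_min_lt (hX : X ∈ domTwoEvent i k) {j : Fin (m + 2)} (hj : j ≠ i) :
    X i < X j := by
  by_cases hjk : j = k
  · exact hjk ▸ lt_of_mem_domTwoRegion hX.1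
  · exact (hX.2 j hjk hj).1.1

theorem domTwoEvent_lt_max (hX : X ∈ domTwoEvent i k) {j : Fin (m + 2)} (hj : j ≠ k) :
    X j < X k := by
  by_cases hji : j = i
  · exact hji ▸ lt_of_mem_domTwoRegion hX.1
  · exact (hX.2 j hj hji).1.2

theorem pairwise_disjoint_domTwoEvent :
    Pairwise (Function.onFun Disjoint fun p : Fin (m + 2) × Fin (m + 2) =>
      domTwoEvent p.1 p.2) := by
  rintro ⟨i, k⟩ ⟨i', k'⟩ hne
  refine disjoint_left.2 fun X hX hX' => ?_
  by_cases hi : i = i'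
  · have hk : k ≠ k' := fun hk => hne (Prod.ext hi hk)
    exact (domTwoEvent_lt_max hX hk.symm).not_gt (domTwoEvent_lt_max hX' hk)
  · exact (domTwoEvent_min_lt hX (Ne.symm hi)).not_gt (domTwoEvent_min_lt hX' hi)

theorem measurableSet_domTwoEvent (i k : Fin (m + 2)) : MeasurableSet (domTwoEvent i k) := by
  have hR := measurableSet_domTwoRegion
  have hV := measurableSet_domTwoGap
  unfold domTwoEvent
  measurability

theorem unifPi_domTwoEvent (hik : i ≠ k) :
    unifPi (m + 2) (domTwoEvent i k) =
      ENNReal.ofReal (4 * (1 - 4 * (1 / 4) ^ (m + 2)) / (9 * (m + 1) * (m + 2))) :=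
  (measure_pi_setOf_forall_ne_ne _ hik.symm measurableSet_domTwoRegion
    measurableSet_domTwoGap).trans (lintegral_domTwoRegion m)

theorem not_exists_dominator_of_mem_domTwoEvent (hX : X ∈ domTwoEvent i k) :
    ¬ ∃ l, ∀ j, X j < 2 * X l ∧ 2 * X l < 1 + X j := by
  rintro ⟨l, hl⟩
  obtain ⟨⟨hi, hk⟩, hgap⟩ := hX
  have hkl := (hl k).1
  have hli := (hl i).2
  by_cases hlk : l = k
  · subst hlk; linarith
  by_cases hli' : l = i
  · subst hli'; linarith
  exact (hgap l hlk hli').2 ⟨by linarith, by linarith⟩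

theorem exists_mem_domTwoEvent (hX : ∀ j, X j ∈ Ioo 0 1) (hinj : Function.Injective X)
    (h : ¬ ∃ l, ∀ j, X j < 2 * X l ∧ 2 * X l < 1 + X j) :
    ∃ i k, i ≠ k ∧ X ∈ domTwoEvent i k := by
  obtain ⟨i, -, hi⟩ := Finset.univ.exists_min_image X Finset.univ_nonempty
  obtain ⟨k, -, hk⟩ := Finset.univ.exists_max_image X Finset.univ_nonempty
  have hsplit (j : Fin (m + 2)) : 2 * X j ≤ X k ∨ 1 + X i ≤ 2 * X j := by
    push Not at h
    obtain ⟨l, hl⟩ := h j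
    rcases lt_or_ge (X l) (2 * X j) with hlj | hlj
    · exact Or.inr (by linarith [hl hlj, hi l (Finset.mem_univ l)])
    · exact Or.inl (by linarith [hk l (Finset.mem_univ l)])
  have hmem : X ∈ domTwoEvent i k := by
    refine ⟨⟨?_, ?_⟩, fun j hjk hji => ⟨⟨?_, ?_⟩, fun hj => ?_⟩⟩
    · rcases hsplit i with h | h
      · exact h
      · linarith [(hX i).2]
    · rcases hsplit k with h | h
      · linarith [(hX k).1]
      · linarith
    · exact (hi j (Finset.mem_univ j)).lt_of_ne (hinj.ne (Ne.symm hji))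
    · exact (hk j (Finset.mem_univ j)).lt_of_ne (hinj.ne hjk)
    · rcases hsplit j with h | h <;> linarith [hj.1, hj.2]
  exact ⟨i, k, fun hik => (lt_of_mem_domTwoRegion hmem.1).ne (congrArg X hik), hmem⟩

end DomTwoEvent

def domTwoSet (m : ℕ) : Set (Fin (m + 2) → ℝ) :=
  ⋃ p ∈ (Finset.univ : Finset (Fin (m + 2))).offDiag, domTwoEvent p.1 p.2

theorem measurableSet_domTwoSet (m : ℕ) : MeasurableSet (domTwoSet m) :=
  Finset.measurableSet_biUnion _ fun p _ => measurableSet_domTwoEvent p.1 p.2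

theorem unifPi_domTwoSet (m : ℕ) :
    unifPi (m + 2) (domTwoSet m) = ENNReal.ofReal (4 / 9 - 16 / 9 * (1 / 4) ^ (m + 2)) := by
  rw [domTwoSet, measure_biUnion_finset (pairwise_disjoint_domTwoEvent.set_pairwise _)
      fun p _ => measurableSet_domTwoEvent p.1 p.2,
    Finset.sum_congr rfl fun p hp => unifPi_domTwoEvent (Finset.mem_offDiag.1 hp).2.2,
    Finset.sum_const, Finset.offDiag_card, Finset.card_univ, Fintype.card_fin,
    Nat.sub_eq_of_eq_add (by ring : (m + 2) * (m + 2) = (m + 2) * (m + 1) + (m + 2)),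
    nsmul_eq_mul, ← ENNReal.ofReal_natCast, ← ENNReal.ofReal_mul (by positivity)]
  congr 1
  push_cast
  field_simp
  ring

theorem ae_domNum_eq_two_iff (m : ℕ) :
    ∀ᵐ X ∂unifPi (m + 2), domNum (m + 2) X (N01 2 (1 / 2)) = 2 ↔ X ∈ domTwoSet m := by
  filter_upwards [ae_unifPi_mem_Ioo (m + 2), ae_injective_pi _] with X hX hinj
  simp only [domNum_N01_eq_two_iff (by omega) hX, domTwoSet, mem_iUnion, Finset.mem_offDiag,
    Finset.mem_univ, true_and, exists_prop, Prod.exists]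
  exact ⟨exists_mem_domTwoEvent hX hinj,
    fun ⟨_, _, _, hX⟩ => not_exists_dominator_of_mem_domTwoEvent hX⟩

theorem ae_domNum_eq_one_iff (m : ℕ) :
    ∀ᵐ X ∂unifPi (m + 2), domNum (m + 2) X (N01 2 (1 / 2)) = 1 ↔ X ∈ (domTwoSet m)ᶜ := by
  filter_upwards [ae_domNum_eq_two_iff m, ae_unifPi_mem_Ioo (m + 2)] with X h2 hX
  rw [mem_compl_iff, ← h2, domNum_N01_eq_two_iff (by omega) hX,
    domNum_N01_eq_one_iff (by omega) hX, not_not]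

/-- For `n ≥ 1` i.i.d. uniform points on `(0,1)` with `r = 2`, `c = 1/2`,
`P(γ = 2) = 4/9 - (16/9)·4⁻ⁿ` and `P(γ = 1) = 5/9 + (16/9)·4⁻ⁿ`. -/
theorem picd_domNum_exact_r2_chalf (n : ℕ) (hn : 1 ≤ n) :
    unifPi n {X | domNum n X (N01 2 (1/2)) = 2} =
        ENNReal.ofReal (4/9 - (16/9) * (1/4 : ℝ) ^ n) ∧
    unifPi n {X | domNum n X (N01 2 (1/2)) = 1} =
        ENNReal.ofReal (5/9 + (16/9) * (1/4 : ℝ) ^ n) := by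
  obtain rfl | ⟨m, rfl⟩ : n = 1 ∨ ∃ m, n = m + 2 := by
    rcases n with _ | _ | m
    exacts [absurd hn (by norm_num), Or.inl rfl, Or.inr ⟨m, rfl⟩]
  · norm_num [domNum_fin_one]
  have hq : (1 / 4 : ℝ) ^ (m + 2) ≤ (1 / 4) ^ 2 :=
    pow_le_pow_of_le_one (by norm_num) (by norm_num) (by omega)
  refine ⟨(measure_congr (Filter.eventuallyEq_set.2 (ae_domNum_eq_two_iff m))).trans
      (unifPi_domTwoSet m),
    (measure_congr (Filter.eventuallyEq_set.2 (ae_domNum_eq_one_iff m))).trans ?_⟩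
  rw [prob_compl_eq_one_sub (measurableSet_domTwoSet m), unifPi_domTwoSet,
    ← ENNReal.ofReal_one, ← ENNReal.ofReal_sub _ (by nlinarith)]
  congr 1
  ring
end

section
/- For i.i.d. uniform points on (0,1) with parameters r = 2, c = 1/2, the domination number of the PICD minus 1 converges in distribution to a Bernoulli random variable with success probability 4/9 as n → ∞. -/
open Set MeasureTheory Filter Topology

/-!
If `a` and `b` are the smallest and largest sample points, a point `t` dominates every sample
point iff all of them lie in `(2t - 1, 2t)`, i.e. iff `t` lies in the gap `(b/2, (a+1)/2)`.
The largest point below `1/2` together with the smallest point above it always dominate, so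
`γₙ ∈ {1, 2}`, and `γₙ = 2` iff no sample point lies in the gap. By exchangeability,
`P(γₙ = 2)` is `n(n-1)` times the probability of that event with `X 0` the minimum and `X 1`
the maximum. Given `(X 0, X 1) = (a, b)` with `2a ≤ b` and `a + 1 ≤ 2b`, the other `n - 2`
points must fall independently into `(a, b)` minus the gap, of length `(3(b - a) - 1)/2`;
integrating gives `P(γₙ = 2) = 4/9 - (16/9) 4⁻ⁿ`.
-/

namespace PICD

variable {n : ℕ}

def IsDominating (X : Fin n → ℝ) (N : ℝ → Set ℝ) (S : Finset (Fin n)) : Prop :=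
  ∀ j, ∃ i ∈ S, X j = X i ∨ X j ∈ N (X i)

section Domination

variable {X : Fin n → ℝ} {N : ℝ → Set ℝ}

lemma domNum_le_card {S : Finset (Fin n)} (hS : IsDominating X N S) : domNum n X N ≤ S.card :=
  Nat.sInf_le ⟨S, rfl, hS⟩

lemma exists_isDominating_card_eq_domNum :
    ∃ S : Finset (Fin n), S.card = domNum n X N ∧ IsDominating X N S :=
  Nat.sInf_mem (s := {k | ∃ S : Finset (Fin n), S.card = k ∧ IsDominating X N S})
    ⟨_, Finset.univ, rfl, fun j => ⟨j, Finset.mem_univ j, Or.inl rfl⟩⟩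

lemma domNum_pos [NeZero n] : 0 < domNum n X N := by
  obtain ⟨S, hcard, hS⟩ := exists_isDominating_card_eq_domNum (X := X) (N := N)
  obtain ⟨i, hi, -⟩ := hS 0
  exact hcard ▸ Finset.card_pos.2 ⟨i, hi⟩

lemma domNum_eq_one_iff [NeZero n] :
    domNum n X N = 1 ↔ ∃ i, ∀ j, X j = X i ∨ X j ∈ N (X i) := by
  constructor
  · intro h
    obtain ⟨S, hcard, hS⟩ := exists_isDominating_card_eq_domNum (X := X) (N := N)
    obtain ⟨i, rfl⟩ := Finset.card_eq_one.1 (hcard.trans h)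
    exact ⟨i, fun j => by simpa using hS j⟩
  · rintro ⟨i, hi⟩
    refine le_antisymm ?_ domNum_pos
    simpa using domNum_le_card (S := {i}) fun j => ⟨i, Finset.mem_singleton_self i, hi j⟩

end Domination

lemma dominates_iff {u v : ℝ} (hu : u ∈ Ioo 0 1) (hv : v ∈ Ioo 0 1) :
    v = u ∨ v ∈ N01 2 (1/2) u ↔ v ∈ Ioo (2 * u - 1) (2 * u) := by
  obtain ⟨hu0, hu1⟩ := hu
  obtain ⟨hv0, hv1⟩ := hv
  unfold N01
  split_ifs with h
  · simp only [mem_Ioo, lt_min_iff]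
    constructor
    · rintro (rfl | ⟨-, -, h'⟩) <;> constructor <;> linarith
    · exact fun h' => Or.inr ⟨hv0, hv1, h'.2⟩
  · simp only [mem_Ioo, max_lt_iff]
    constructor
    · rintro (rfl | ⟨⟨-, h'⟩, -⟩) <;> constructor <;> linarith
    · exact fun h' => Or.inr ⟨⟨hv0, by linarith [h'.1]⟩, hv1⟩

lemma exists_card_le_one_forall_le {ι : Type*} (s : Finset ι) (f : ι → ℝ) :
    ∃ S ⊆ s, S.card ≤ 1 ∧ ∀ k ∈ s, ∃ i ∈ S, f k ≤ f i := by
  rcases s.eq_empty_or_nonempty with rfl | hs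
  · exact ⟨∅, subset_rfl, by simp, by simp⟩
  · obtain ⟨i, hi, hmax⟩ := s.exists_max_image f hs
    exact ⟨{i}, by simpa, by simp, fun k hk => ⟨i, Finset.mem_singleton_self i, hmax k hk⟩⟩

def noDominator (n : ℕ) : Set (Fin n → ℝ) :=
  {x | ∀ i, ∃ j, x j ∉ Ioo (2 * x i - 1) (2 * x i)}

section Threshold

variable {x : Fin n → ℝ}

lemma domNum_le_two (hx : ∀ i, x i ∈ Ioo 0 1) : domNum n x (N01 2 (1/2)) ≤ 2 := by
  obtain ⟨L, hLs, hLcard, hL⟩ :=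
    exists_card_le_one_forall_le (Finset.univ.filter fun k => x k < 1/2) x
  obtain ⟨R, hRs, hRcard, hR⟩ :=
    exists_card_le_one_forall_le (Finset.univ.filter fun k => 1/2 ≤ x k) (- x ·)
  have hdom : IsDominating x (N01 2 (1/2)) (L ∪ R) := by
    intro k
    obtain ⟨i, hi, hki⟩ : ∃ i ∈ L ∪ R, x k ∈ Ioo (2 * x i - 1) (2 * x i) := by
      rcases lt_or_ge (x k) (1/2) with h | h
      · obtain ⟨i, hi, hle⟩ := hL k (by simpa using h)
        have := (Finset.mem_filter.1 (hLs hi)).2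
        exact ⟨i, Finset.mem_union_left R hi, by linarith [(hx k).1], by linarith [(hx i).1]⟩
      · obtain ⟨i, hi, hle⟩ := hR k (by simpa using h)
        have := (Finset.mem_filter.1 (hRs hi)).2
        exact ⟨i, Finset.mem_union_right L hi, by linarith [(hx i).2], by linarith [(hx k).2]⟩
    exact ⟨i, hi, (dominates_iff (hx i) (hx k)).2 hki⟩
  calc domNum n x (N01 2 (1/2)) ≤ (L ∪ R).card := domNum_le_card hdom
    _ ≤ L.card + R.card := Finset.card_union_le L R
    _ ≤ 2 := by omega

lemma domNum_eq_one_iff_notMem_noDominator [NeZero n] (hx : ∀ i, x i ∈ Ioo 0 1) :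
    domNum n x (N01 2 (1/2)) = 1 ↔ x ∉ noDominator n := by
  simp only [domNum_eq_one_iff, dominates_iff (hx _) (hx _), noDominator, mem_ofPred_eq,
    not_forall, not_exists, not_not]

lemma domNum_eq_two_iff_mem_noDominator [NeZero n] (hx : ∀ i, x i ∈ Ioo 0 1) :
    domNum n x (N01 2 (1/2)) = 2 ↔ x ∈ noDominator n := by
  rw [← not_iff_not, ← domNum_eq_one_iff_notMem_noDominator hx]
  have := domNum_le_two hx
  have : 0 < domNum n x (N01 2 (1/2)) := domNum_pos
  omega

end Threshold

/-- `t ∉ (b/2, (a+1)/2)`. -/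
def OutsideGap (a b t : ℝ) : Prop := a ≤ 2 * t - 1 ∨ 2 * t ≤ b

def minMaxAt {ι : Type*} (i j : ι) : Set (ι → ℝ) :=
  {x | (∀ k ≠ i, x i < x k) ∧ ∀ k ≠ j, x k < x j}

lemma exists_notMem_Ioo_iff {ι : Type*} {x : ι → ℝ} {i₀ i₁ : ι} (h₀ : ∀ j, x i₀ ≤ x j)
    (h₁ : ∀ j, x j ≤ x i₁) {a b : ℝ} : (∃ j, x j ∉ Ioo a b) ↔ x i₀ ≤ a ∨ b ≤ x i₁ := by
  simp only [mem_Ioo, not_and_or, not_lt]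
  constructor
  · rintro ⟨j, h | h⟩
    · exact Or.inl ((h₀ j).trans h)
    · exact Or.inr (h.trans (h₁ j))
  · rintro (h | h)
    · exact ⟨i₀, Or.inl h⟩
    · exact ⟨i₁, Or.inr h⟩

lemma le_of_mem_minMaxAt {ι : Type*} {x : ι → ℝ} {i j : ι} (hx : x ∈ minMaxAt i j) :
    (∀ k, x i ≤ x k) ∧ ∀ k, x k ≤ x j := by
  refine ⟨fun k => ?_, fun k => ?_⟩
  · rcases eq_or_ne k i with rfl | hk
    exacts [le_rfl, (hx.1 k hk).le]
  · rcases eq_or_ne k j with rfl | hk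
    exacts [le_rfl, (hx.2 k hk).le]

lemma mem_noDominator_iff {x : Fin n → ℝ} {i j : Fin n} (hx : x ∈ minMaxAt i j) :
    x ∈ noDominator n ↔ ∀ k, OutsideGap (x i) (x j) (x k) :=
  forall_congr' fun _ =>
    exists_notMem_Ioo_iff (le_of_mem_minMaxAt hx).1 (le_of_mem_minMaxAt hx).2

def gapFreeEnds : Set (ℝ × ℝ) :=
  {p | p.1 < p.2 ∧ OutsideGap p.1 p.2 p.1 ∧ OutsideGap p.1 p.2 p.2}

def gapFreeInterior : Set (ℝ × ℝ × ℝ) :=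
  {q | q.1 < q.2.2 ∧ q.2.2 < q.2.1 ∧ OutsideGap q.1 q.2.1 q.2.2}

section ZeroOne

variable {m : ℕ}

lemma mem_minMaxAt_zero_one_iff {x : Fin (m + 2) → ℝ} :
    x ∈ minMaxAt 0 1 ↔ x 0 < x 1 ∧ ∀ k : Fin m, x 0 < x k.succ.succ ∧ x k.succ.succ < x 1 := by
  simp only [minMaxAt, mem_ofPred_eq, Fin.forall_fin_succ (n := m + 1),
    Fin.forall_fin_succ (n := m)]
  simp [Fin.succ_ne_zero, Fin.succ_succ_ne_one, forall_and]
  tauto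

lemma noDominator_inter_minMaxAt_zero_one :
    noDominator (m + 2) ∩ minMaxAt 0 1 =
      {x | (x 0, x 1) ∈ gapFreeEnds ∧
        ∀ k : Fin m, (x 0, x 1, x k.succ.succ) ∈ gapFreeInterior} := by
  ext x
  simp only [mem_inter_iff, mem_ofPred_eq, gapFreeEnds, gapFreeInterior]
  constructor
  · rintro ⟨hT, hU⟩
    rw [mem_noDominator_iff hU] at hT
    obtain ⟨h01, hk⟩ := mem_minMaxAt_zero_one_iff.1 hU
    exact ⟨⟨h01, hT 0, hT 1⟩, fun k => ⟨(hk k).1, (hk k).2, hT _⟩⟩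
  · rintro ⟨⟨h01, h0, h1⟩, hk⟩
    have hU : x ∈ minMaxAt 0 1 :=
      mem_minMaxAt_zero_one_iff.2 ⟨h01, fun k => ⟨(hk k).1, (hk k).2.1⟩⟩
    refine ⟨(mem_noDominator_iff hU).2 ?_, hU⟩
    simp only [Fin.forall_fin_succ (n := m + 1), Fin.forall_fin_succ (n := m),
      Fin.succ_zero_eq_one]
    exact ⟨h0, h1, fun k => (hk k).2.2⟩

end ZeroOne

lemma measurableSet_noDominator (n : ℕ) : MeasurableSet (noDominator n) := by
  simp only [noDominator, mem_Ioo, not_and_or, not_lt, ofPred_forall, ofPred_exists, ofPred_or]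
  exact MeasurableSet.iInter fun i => MeasurableSet.iUnion fun j =>
    (measurableSet_le (by fun_prop) (by fun_prop)).union
      (measurableSet_le (by fun_prop) (by fun_prop))

lemma comp_perm_mem_noDominator_iff (σ : Equiv.Perm (Fin n)) (x : Fin n → ℝ) :
    x ∘ σ ∈ noDominator n ↔ x ∈ noDominator n := by
  change (∀ i, ∃ j, x (σ j) ∉ Ioo (2 * x (σ i) - 1) (2 * x (σ i))) ↔
    ∀ i, ∃ j, x j ∉ Ioo (2 * x i - 1) (2 * x i)
  rw [σ.surjective.forall (p := fun i => ∃ j, x j ∉ Ioo (2 * x i - 1) (2 * x i))]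
  exact forall_congr' fun i => (σ.surjective.exists (p := fun j => x j ∉ _)).symm

lemma measurableSet_gapFreeEnds : MeasurableSet gapFreeEnds := by
  simp only [gapFreeEnds, OutsideGap, ofPred_and, ofPred_or]
  measurability

lemma measurableSet_gapFreeInterior : MeasurableSet gapFreeInterior := by
  simp only [gapFreeInterior, OutsideGap, ofPred_and, ofPred_or]
  measurability

section Split

variable {α : Type*} [MeasurableSpace α] {ν : Measure α} [SigmaFinite ν] {m : ℕ}

lemma measurePreserving_comp_perm {ι : Type*} [Fintype ι] (σ : Equiv.Perm ι) :
    MeasurePreserving (fun x : ι → α => x ∘ σ) (Measure.pi fun _ => ν)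
      (Measure.pi fun _ => ν) := by
  convert measurePreserving_piCongrLeft (fun _ : ι => ν) σ.symm using 1
  ext x i
  simp [MeasurableEquiv.piCongrLeft, Equiv.piCongrLeft]

lemma measurePreserving_split_zero_one :
    MeasurePreserving (fun x : Fin (m + 2) → α => (x 0, x 1, fun k : Fin m => x k.succ.succ))
      (Measure.pi fun _ => ν) (ν.prod (ν.prod (Measure.pi fun _ => ν))) :=
  ((MeasurePreserving.id ν).prod (measurePreserving_piFinSuccAbove (fun _ => ν) 0)).comp
    (measurePreserving_piFinSuccAbove (fun _ => ν) 0)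

lemma pi_measure_setOf_zero_one {A : Set (α × α)} {C : Set (α × α × α)} (hA : MeasurableSet A)
    (hC : MeasurableSet C) :
    Measure.pi (fun _ : Fin (m + 2) => ν)
        {x | (x 0, x 1) ∈ A ∧ ∀ k : Fin m, (x 0, x 1, x k.succ.succ) ∈ C} =
      ∫⁻ a, ∫⁻ b, A.indicator (fun p => ν {t | (p.1, p.2, t) ∈ C} ^ m) (a, b) ∂ν ∂ν := by
  set W : Set (α × α × (Fin m → α)) :=
    (fun p => (p.1, p.2.1)) ⁻¹' A ∩ ⋂ k, (fun p => (p.1, p.2.1, p.2.2 k)) ⁻¹' C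
  have hW : MeasurableSet W :=
    (hA.preimage (by fun_prop)).inter (MeasurableSet.iInter fun k => hC.preimage (by fun_prop))
  have hpre :
      {x : Fin (m + 2) → α | (x 0, x 1) ∈ A ∧ ∀ k : Fin m, (x 0, x 1, x k.succ.succ) ∈ C} =
        (fun x => (x 0, x 1, fun k : Fin m => x k.succ.succ)) ⁻¹' W := by
    ext x; simp [W]
  rw [hpre, measurePreserving_split_zero_one.measure_preimage hW.nullMeasurableSet,
    Measure.prod_apply hW]
  refine lintegral_congr fun a => ?_
  rw [Measure.prod_apply (measurable_prodMk_left hW)]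
  refine lintegral_congr fun b => ?_
  by_cases hab : (a, b) ∈ A
  · have : Prod.mk b ⁻¹' (Prod.mk a ⁻¹' W) = univ.pi fun _ => {t | (a, b, t) ∈ C} := by
      ext y; simp [W, hab]
    rw [indicator_of_mem hab, this, Measure.pi_pi, Finset.prod_const, Finset.card_univ,
      Fintype.card_fin]
  · have : Prod.mk b ⁻¹' (Prod.mk a ⁻¹' W) = ∅ := by
      ext y; simp [W, hab]
    rw [indicator_of_notMem hab, this, measure_empty]

end Split

section Symmetry

variable {ν : Measure ℝ} [SigmaFinite ν] {m : ℕ}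

lemma exists_perm_apply_zero_apply_one {i j : Fin (m + 2)} (hij : i ≠ j) :
    ∃ σ : Equiv.Perm (Fin (m + 2)), σ 0 = i ∧ σ 1 = j :=
  MulAction.is_two_pretransitive_iff.1 (Equiv.Perm.isMultiplyPretransitive _ 2)
    (by simp) hij

lemma pi_measure_coord_eq_zero [NullSingletonClass ν] {i j : Fin (m + 2)} (hij : i ≠ j) :
    Measure.pi (fun _ => ν) {x : Fin (m + 2) → ℝ | x i = x j} = 0 := by
  obtain ⟨σ, rfl, rfl⟩ := exists_perm_apply_zero_apply_one hij
  have hzero_one : Measure.pi (fun _ => ν) {x : Fin (m + 2) → ℝ | x 0 = x 1} = 0 := by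
    have := pi_measure_setOf_zero_one (ν := ν) (m := m) measurableSet_diagonal
      (MeasurableSet.univ : MeasurableSet (univ : Set (ℝ × ℝ × ℝ)))
    simp only [mem_diagonal_iff, mem_univ, implies_true, and_true, ofPred_true] at this
    have hslice (a : ℝ) : (fun b => (diagonal ℝ).indicator (fun _ => ν univ ^ m) (a, b)) =
        ({a} : Set ℝ).indicator fun _ => ν univ ^ m := by
      ext b; simp [indicator, eq_comm]
    simp only [this, hslice, lintegral_indicator_const (measurableSet_singleton _),
      measure_singleton, mul_zero, lintegral_zero]
  rw [show {x : Fin (m + 2) → ℝ | x (σ 0) = x (σ 1)} = (· ∘ σ) ⁻¹' {y | y 0 = y 1} from rfl,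
    (measurePreserving_comp_perm σ).measure_preimage
      (measurableSet_eq_fun (by fun_prop) (by fun_prop)).nullMeasurableSet, hzero_one]

lemma ae_injective [NullSingletonClass ν] :
    ∀ᵐ x ∂Measure.pi (fun _ : Fin (m + 2) => ν), Function.Injective x := by
  simp only [Function.Injective, ae_all_iff]
  intro i j
  by_cases hij : i = j
  · exact ae_of_all _ fun _ _ => hij
  · filter_upwards [compl_mem_ae_iff.2 (pi_measure_coord_eq_zero (ν := ν) hij)] with x hx h
    exact absurd h hx

lemma comp_perm_mem_minMaxAt_iff {ι : Type*} (σ : Equiv.Perm ι) {x : ι → ℝ} {i j : ι} :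
    x ∘ σ ∈ minMaxAt i j ↔ x ∈ minMaxAt (σ i) (σ j) := by
  change (_ ∧ _) ↔ (_ ∧ _)
  rw [σ.surjective.forall (p := fun k => k ≠ σ i → x (σ i) < x k),
    σ.surjective.forall (p := fun k => k ≠ σ j → x k < x (σ j))]
  simp only [σ.injective.ne_iff, Function.comp_apply]

lemma exists_mem_minMaxAt {ι : Type*} [Fintype ι] [Nontrivial ι] {x : ι → ℝ}
    (hx : Function.Injective x) : ∃ i j, i ≠ j ∧ x ∈ minMaxAt i j := by
  obtain ⟨i, -, hi⟩ := Finset.exists_min_image Finset.univ x Finset.univ_nonempty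
  obtain ⟨j, -, hj⟩ := Finset.exists_max_image Finset.univ x Finset.univ_nonempty
  have hij : i ≠ j := by
    rintro rfl
    obtain ⟨k, hk⟩ := exists_ne i
    exact hk (hx (le_antisymm (hj k (Finset.mem_univ k)) (hi k (Finset.mem_univ k))))
  exact ⟨i, j, hij, fun k hk => (hi k (Finset.mem_univ k)).lt_of_ne (hx.ne hk.symm),
    fun k hk => (hj k (Finset.mem_univ k)).lt_of_ne (hx.ne hk)⟩

lemma disjoint_minMaxAt {ι : Type*} {i j i' j' : ι} (h : (i, j) ≠ (i', j')) :
    Disjoint (minMaxAt i j) (minMaxAt i' j') := by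
  rw [disjoint_left]
  rintro x ⟨hi, hj⟩ ⟨hi', hj'⟩
  by_cases hii : i = i'
  · subst hii
    have hjj : j ≠ j' := fun hjj => h (by rw [hjj])
    exact lt_asymm (hj j' hjj.symm) (hj' j hjj)
  · exact lt_asymm (hi i' (Ne.symm hii)) (hi' i hii)

lemma measurableSet_minMaxAt {ι : Type*} [Countable ι] (i j : ι) :
    MeasurableSet (minMaxAt i j) := by
  simp only [minMaxAt, ofPred_and, ofPred_forall]
  exact (MeasurableSet.iInter fun k => MeasurableSet.iInter fun _ =>
    measurableSet_lt (by fun_prop) (by fun_prop)).inter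
    (MeasurableSet.iInter fun k => MeasurableSet.iInter fun _ =>
    measurableSet_lt (by fun_prop) (by fun_prop))

variable {S : Set (Fin (m + 2) → ℝ)}

lemma measure_inter_minMaxAt_perm (hSm : MeasurableSet S)
    (hS : ∀ (σ : Equiv.Perm (Fin (m + 2))) x, x ∘ σ ∈ S ↔ x ∈ S) (σ : Equiv.Perm (Fin (m + 2))) :
    Measure.pi (fun _ => ν) (S ∩ minMaxAt (σ 0) (σ 1)) =
      Measure.pi (fun _ => ν) (S ∩ minMaxAt 0 1) := by
  have hpre : (· ∘ σ) ⁻¹' (S ∩ minMaxAt 0 1) = S ∩ minMaxAt (σ 0) (σ 1) := by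
    ext x; simp [hS, comp_perm_mem_minMaxAt_iff]
  rw [← hpre, (measurePreserving_comp_perm σ).measure_preimage
    (hSm.inter (measurableSet_minMaxAt 0 1)).nullMeasurableSet]

lemma pi_measure_eq_mul_inter_minMaxAt [NullSingletonClass ν] (hSm : MeasurableSet S)
    (hS : ∀ (σ : Equiv.Perm (Fin (m + 2))) x, x ∘ σ ∈ S ↔ x ∈ S) :
    Measure.pi (fun _ => ν) S =
      ((m + 2) * (m + 1) : ℕ) * Measure.pi (fun _ => ν) (S ∩ minMaxAt 0 1) := by
  set μ := Measure.pi fun _ : Fin (m + 2) => ν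
  set P := (Finset.univ : Finset (Fin (m + 2))).offDiag
  have hcover : ∀ᵐ x ∂μ, x ∈ ⋃ p ∈ P, minMaxAt p.1 p.2 := by
    filter_upwards [ae_injective] with x hx
    obtain ⟨i, j, hij, hx⟩ := exists_mem_minMaxAt hx
    exact mem_biUnion (x := (i, j)) (by simpa [P] using hij) hx
  have hpiece : ∀ p ∈ P, μ (S ∩ minMaxAt p.1 p.2) = μ (S ∩ minMaxAt 0 1) := by
    rintro ⟨i, j⟩ hp
    obtain ⟨σ, rfl, rfl⟩ := exists_perm_apply_zero_apply_one (by simpa [P] using hp)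
    exact measure_inter_minMaxAt_perm hSm hS σ
  rw [← measure_inter_conull hcover, ofPred_mem_eq, inter_iUnion₂, measure_biUnion_finset
    (fun _ _ _ _ hpq => (disjoint_minMaxAt hpq).mono inter_subset_right inter_subset_right)
    (fun p _ => hSm.inter (measurableSet_minMaxAt _ _)), Finset.sum_congr rfl hpiece,
    Finset.sum_const, Finset.offDiag_card, Finset.card_univ, Fintype.card_fin, nsmul_eq_mul]
  congr 2
  rw [← Nat.mul_sub_one]; rfl

end Symmetry

lemma integral_pow_of_affine {g : ℝ → ℝ} {c d : ℝ} (hc : c ≠ 0) (hg : ∀ x, g x = c * x + d)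
    (k : ℕ) (u v : ℝ) :
    ∫ x in u..v, g x ^ k = (g v ^ (k + 1) - g u ^ (k + 1)) / (c * (k + 1)) := by
  simp only [hg]
  rw [intervalIntegral.integral_comp_mul_add (fun t => t ^ k) hc d, integral_pow, smul_eq_mul]
  field_simp

section Uniform

local notation "ν₀" => volume.restrict (Ioo (0:ℝ) 1)

variable (m : ℕ)

lemma mem_gapFreeEnds_iff {a b : ℝ} (ha : a ∈ Ioo 0 1) (hb : b ∈ Ioo 0 1) :
    (a, b) ∈ gapFreeEnds ↔ 2 * a ≤ b ∧ a + 1 ≤ 2 * b := by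
  obtain ⟨ha0, ha1⟩ := ha
  obtain ⟨hb0, hb1⟩ := hb
  simp only [gapFreeEnds, OutsideGap, mem_ofPred_eq]
  constructor
  · rintro ⟨-, h1 | h1, h2 | h2⟩ <;> constructor <;> linarith
  · rintro ⟨h1, h2⟩
    exact ⟨by linarith, Or.inr h1, Or.inl (by linarith)⟩

lemma restrict_Ioo_slice_gapFreeInterior {a b : ℝ} (ha : 0 < a) (hb : b < 1) (h₁ : 2 * a ≤ b)
    (h₂ : a + 1 ≤ 2 * b) :
    ν₀ {t | (a, b, t) ∈ gapFreeInterior} = ENNReal.ofReal ((3 * (b - a) - 1) / 2) := by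
  have hslice : {t | (a, b, t) ∈ gapFreeInterior} ∩ Ioo 0 1 =
      Ioc a (b / 2) ∪ Ico ((a + 1) / 2) b := by
    ext t
    simp only [gapFreeInterior, OutsideGap, mem_inter_iff, mem_ofPred_eq, mem_Ioo,
      mem_union, mem_Ioc, mem_Ico]
    constructor
    · rintro ⟨⟨hat, htb, h | h⟩, -⟩
      · exact Or.inr ⟨by linarith, htb⟩
      · exact Or.inl ⟨hat, by linarith⟩
    · rintro (⟨hat, htb⟩ | ⟨hat, htb⟩)
      · exact ⟨⟨hat, by linarith, Or.inr (by linarith)⟩, by linarith, by linarith⟩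
      · exact ⟨⟨by linarith, htb, Or.inl (by linarith)⟩, by linarith, by linarith⟩
  have hdisj : Disjoint (Ioc a (b / 2)) (Ico ((a + 1) / 2) b) :=
    disjoint_left.2 fun t h h' => by linarith [h.2, h'.1]
  rw [Measure.restrict_apply' measurableSet_Ioo, hslice, measure_union hdisj measurableSet_Ico,
    Real.volume_Ioc, Real.volume_Ico, ← ENNReal.ofReal_add (by linarith) (by linarith)]
  congr 1
  ring

def gapFreeRegion : Set (ℝ × ℝ) := {p | 0 ≤ p.1 ∧ p.2 ≤ 1 ∧ 2 * p.1 ≤ p.2 ∧ p.1 + 1 ≤ 2 * p.2}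

noncomputable def gapFreeKernel : ℝ × ℝ → ℝ :=
  gapFreeRegion.indicator fun p => ((3 * (p.2 - p.1) - 1) / 2) ^ m

lemma gapFreeKernel_mem_Icc (p : ℝ × ℝ) : gapFreeKernel m p ∈ Icc 0 1 := by
  unfold gapFreeKernel
  by_cases hp : p ∈ gapFreeRegion
  · rw [indicator_of_mem hp]
    obtain ⟨h0, h1, h2, h3⟩ := hp
    exact ⟨pow_nonneg (by linarith) m, pow_le_one₀ (by linarith) (by linarith)⟩
  · rw [indicator_of_notMem hp]
    exact ⟨le_rfl, zero_le_one⟩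

lemma measurable_gapFreeKernel : Measurable (gapFreeKernel m) :=
  (by fun_prop : Measurable fun p : ℝ × ℝ => ((3 * (p.2 - p.1) - 1) / 2) ^ m).indicator
    (by simp only [gapFreeRegion, ofPred_and]; measurability)

lemma integrable_gapFreeKernel : Integrable (gapFreeKernel m) (Measure.prod ν₀ ν₀) :=
  Integrable.of_bound (measurable_gapFreeKernel m).aestronglyMeasurable 1 <| ae_of_all _ fun p => by
    rw [Real.norm_eq_abs, abs_of_nonneg (gapFreeKernel_mem_Icc m p).1]
    exact (gapFreeKernel_mem_Icc m p).2

lemma indicator_gapFreeEnds_eq {a b : ℝ} (ha : a ∈ Ioo 0 1) (hb : b ∈ Ioo 0 1) :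
    gapFreeEnds.indicator (fun p => ν₀ {t | (p.1, p.2, t) ∈ gapFreeInterior} ^ m) (a, b) =
      ENNReal.ofReal (gapFreeKernel m (a, b)) := by
  by_cases h : 2 * a ≤ b ∧ a + 1 ≤ 2 * b
  · rw [indicator_of_mem ((mem_gapFreeEnds_iff ha hb).2 h), gapFreeKernel,
      indicator_of_mem (show (a, b) ∈ gapFreeRegion from ⟨ha.1.le, hb.2.le, h⟩),
      restrict_Ioo_slice_gapFreeInterior ha.1 hb.2 h.1 h.2, ← ENNReal.ofReal_pow (by linarith)]
  · rw [indicator_of_notMem (mt (mem_gapFreeEnds_iff ha hb).1 h), gapFreeKernel,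
      indicator_of_notMem fun h' => h ⟨h'.2.2.1, h'.2.2.2⟩, ENNReal.ofReal_zero]

lemma lintegral_indicator_gapFreeEnds :
    ∫⁻ a, ∫⁻ b, gapFreeEnds.indicator (fun p => ν₀ {t | (p.1, p.2, t) ∈ gapFreeInterior} ^ m)
        (a, b) ∂ν₀ ∂ν₀ =
      ENNReal.ofReal (∫ a in Ioo 0 1, ∫ b in Ioo 0 1, gapFreeKernel m (a, b)) := by
  calc _ = ∫⁻ a, ∫⁻ b, ENNReal.ofReal (gapFreeKernel m (a, b)) ∂ν₀ ∂ν₀ :=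
        setLIntegral_congr_fun measurableSet_Ioo fun a ha =>
          setLIntegral_congr_fun measurableSet_Ioo fun b hb => indicator_gapFreeEnds_eq m ha hb
    _ = ∫⁻ p, ENNReal.ofReal (gapFreeKernel m p) ∂(Measure.prod ν₀ ν₀) :=
        (lintegral_prod _ (measurable_gapFreeKernel m).ennreal_ofReal.aemeasurable).symm
    _ = ENNReal.ofReal (∫ p, gapFreeKernel m p ∂(Measure.prod ν₀ ν₀)) :=
        (ofReal_integral_eq_lintegral_ofReal (integrable_gapFreeKernel m)
          (ae_of_all _ fun p => (gapFreeKernel_mem_Icc m p).1)).symm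
    _ = _ := by rw [integral_prod _ (integrable_gapFreeKernel m)]

lemma setIntegral_gapFreeKernel_slice {a l : ℝ} (ha₀ : 0 ≤ a) (ha : a ≤ 1 / 2)
    (hl : max (2 * a) ((a + 1) / 2) = l) :
    ∫ b in Ioo 0 1, gapFreeKernel m (a, b) =
      (((2 - 3 * a) / 2) ^ (m + 1) - ((3 * (l - a) - 1) / 2) ^ (m + 1)) / (3 / 2 * (m + 1)) := by
  have hl₀ : 0 < l := hl ▸ lt_max_of_lt_right (by linarith)
  have hl₁ : l ≤ 1 := hl ▸ max_le (by linarith) (by linarith)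
  have hslice : ∀ b ∈ Ioo (0 : ℝ) 1, gapFreeKernel m (a, b) =
      (Ici l).indicator (fun b => ((3 * (b - a) - 1) / 2) ^ m) b := by
    intro b hb
    have : (a, b) ∈ gapFreeRegion ↔ b ∈ Ici l := by
      simp only [gapFreeRegion, mem_ofPred_eq, mem_Ici, ← hl, max_le_iff]
      constructor
      · rintro ⟨-, -, h₁, h₂⟩; exact ⟨h₁, by linarith⟩
      · rintro ⟨h₁, h₂⟩; exact ⟨ha₀, hb.2.le, h₁, by linarith⟩
    simp only [gapFreeKernel, indicator, this]
  have hIco : Ioo (0 : ℝ) 1 ∩ Ici l = Ico l 1 := by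
    ext b
    simp only [mem_inter_iff, mem_Ioo, mem_Ici, mem_Ico]
    exact ⟨fun h => ⟨h.2, h.1.2⟩, fun h => ⟨⟨hl₀.trans_le h.1, h.2⟩, h.1⟩⟩
  rw [setIntegral_congr_fun measurableSet_Ioo hslice, setIntegral_indicator measurableSet_Ici,
    hIco, setIntegral_congr_set Ico_ae_eq_Ioc, ← intervalIntegral.integral_of_le hl₁,
    integral_pow_of_affine (g := fun b => (3 * (b - a) - 1) / 2) (c := 3 / 2)
      (d := -(3 * a + 1) / 2) (by norm_num) (fun b => by ring)]
  congr 3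
  ring

lemma setIntegral_gapFreeKernel_slice_of_half_le {a : ℝ} (ha : 1 / 2 ≤ a) :
    ∫ b in Ioo 0 1, gapFreeKernel m (a, b) = 0 := by
  refine setIntegral_eq_zero_of_forall_eq_zero fun b hb => indicator_of_notMem ?_ _
  rintro ⟨-, -, h, -⟩
  linarith [hb.2]

lemma integral_gapFreeKernel_eq_add :
    ∫ a in Ioo 0 1, ∫ b in Ioo 0 1, gapFreeKernel m (a, b) =
      (∫ a in (0 : ℝ)..1 / 3,
        (((2 - 3 * a) / 2) ^ (m + 1) - ((1 - 3 * a) / 4) ^ (m + 1)) / (3 / 2 * (m + 1))) +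
      ∫ a in (1 / 3 : ℝ)..1 / 2,
        (((2 - 3 * a) / 2) ^ (m + 1) - ((3 * a - 1) / 2) ^ (m + 1)) / (3 / 2 * (m + 1)) := by
  set F := fun a => ∫ b in Ioo 0 1, gapFreeKernel m (a, b)
  have hF : IntegrableOn F (Icc 0 1) :=
    IntegrableOn.congr_set_ae (integrable_gapFreeKernel m).integral_prod_left Ioo_ae_eq_Icc.symm
  have hFi {u v : ℝ} (hu : 0 ≤ u) (huv : u ≤ v) (hv : v ≤ 1) : IntervalIntegrable F volume u v :=
    (hF.mono_set (by rw [uIcc_of_le huv]; exact Icc_subset_Icc hu hv)).intervalIntegrable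
  have hupper : ∫ a in (1 / 2 : ℝ)..1, F a = 0 := by
    rw [← intervalIntegral.integral_zero]
    refine intervalIntegral.integral_congr fun a ha => ?_
    rw [uIcc_of_le (by norm_num), mem_Icc] at ha
    exact setIntegral_gapFreeKernel_slice_of_half_le m ha.1
  rw [setIntegral_congr_set Ioo_ae_eq_Ioc, ← intervalIntegral.integral_of_le zero_le_one,
    ← intervalIntegral.integral_add_adjacent_intervals (b := 1 / 2)
      (hFi le_rfl (by norm_num) (by norm_num)) (hFi (by norm_num) (by norm_num) le_rfl),
    ← intervalIntegral.integral_add_adjacent_intervals (b := 1 / 3)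
      (hFi le_rfl (by norm_num) (by norm_num)) (hFi (by norm_num) (by norm_num) (by norm_num)),
    hupper, add_zero]
  congr 1 <;> refine intervalIntegral.integral_congr fun a ha => ?_ <;>
    rw [uIcc_of_le (by norm_num), mem_Icc] at ha <;> simp only [F]
  · rw [setIntegral_gapFreeKernel_slice m ha.1 (by linarith) (max_eq_right (by linarith))]
    congr 3
    ring
  · rw [setIntegral_gapFreeKernel_slice m (by linarith) ha.2 (max_eq_left (by linarith))]
    congr 3
    ring

lemma integral_gapFreeKernel :
    ∫ a in Ioo 0 1, ∫ b in Ioo 0 1, gapFreeKernel m (a, b) =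
      4 * (1 - 4 * (1 / 4) ^ (m + 2)) / (9 * (m + 1) * (m + 2)) := by
  have hpow {g : ℝ → ℝ} (hg : Continuous g) (u v : ℝ) :
      IntervalIntegrable (fun a => g a ^ (m + 1)) volume u v :=
    (hg.pow (m + 1)).intervalIntegrable u v
  rw [integral_gapFreeKernel_eq_add, intervalIntegral.integral_div, intervalIntegral.integral_div,
    intervalIntegral.integral_sub (hpow (by fun_prop) _ _) (hpow (by fun_prop) _ _),
    intervalIntegral.integral_sub (hpow (by fun_prop) _ _) (hpow (by fun_prop) _ _)]
  simp only [integral_pow_of_affine (g := fun a => (2 - 3 * a) / 2) (c := -3 / 2) (d := 1)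
      (by norm_num) (fun a => by ring),
    integral_pow_of_affine (g := fun a => (1 - 3 * a) / 4) (c := -3 / 4) (d := 1 / 4)
      (by norm_num) (fun a => by ring),
    integral_pow_of_affine (g := fun a => (3 * a - 1) / 2) (c := 3 / 2) (d := -1 / 2)
      (by norm_num) (fun a => by ring)]
  norm_num
  field_simp
  ring

lemma ae_mem_Ioo (n : ℕ) : ∀ᵐ x ∂unifPi n, ∀ i, x i ∈ Ioo 0 1 :=
  ae_all_iff.2 fun _ => Measure.tendsto_eval_ae_ae.eventually (ae_restrict_mem measurableSet_Ioo)

instance : IsProbabilityMeasure ν₀ := ⟨by simp⟩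

instance (n : ℕ) : IsProbabilityMeasure (unifPi n) := by
  unfold unifPi
  infer_instance

lemma unifPi_noDominator :
    unifPi (m + 2) (noDominator (m + 2)) = ENNReal.ofReal (4/9 - 16/9 * (1/4) ^ (m + 2)) := by
  rw [unifPi, pi_measure_eq_mul_inter_minMaxAt (measurableSet_noDominator _)
      comp_perm_mem_noDominator_iff, noDominator_inter_minMaxAt_zero_one,
    pi_measure_setOf_zero_one measurableSet_gapFreeEnds measurableSet_gapFreeInterior,
    lintegral_indicator_gapFreeEnds, integral_gapFreeKernel, ← ENNReal.ofReal_natCast,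
    ← ENNReal.ofReal_mul (by positivity)]
  congr 1
  push_cast
  field_simp
  ring

lemma toReal_unifPi_domNum_eq_two :
    (unifPi (m + 2) {X | domNum (m + 2) X (N01 2 (1/2)) = 2}).toReal =
      4/9 - 16/9 * (1/4) ^ (m + 2) := by
  have hae : {X | domNum (m + 2) X (N01 2 (1/2)) = 2} =ᵐ[unifPi (m + 2)] noDominator (m + 2) :=
    (ae_mem_Ioo _).mono fun x hx => propext (domNum_eq_two_iff_mem_noDominator hx)
  have hq : (1/4 : ℝ) ^ (m + 2) ≤ 1/4 := pow_le_of_le_one (by norm_num) (by norm_num) (by omega)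
  rw [measure_congr hae, unifPi_noDominator, ENNReal.toReal_ofReal (by linarith)]

lemma toReal_unifPi_domNum_eq_one :
    (unifPi (m + 2) {X | domNum (m + 2) X (N01 2 (1/2)) = 1}).toReal =
      5/9 + 16/9 * (1/4) ^ (m + 2) := by
  have hae : {X | domNum (m + 2) X (N01 2 (1/2)) = 1} =ᵐ[unifPi (m + 2)]
      ((noDominator (m + 2))ᶜ : Set (Fin (m + 2) → ℝ)) :=
    (ae_mem_Ioo _).mono fun x hx => propext (domNum_eq_one_iff_notMem_noDominator hx)
  have hq : (1/4 : ℝ) ^ (m + 2) ≤ 1/4 := pow_le_of_le_one (by norm_num) (by norm_num) (by omega)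
  rw [measure_congr hae, ← measureReal_def,
    probReal_compl_eq_one_sub (measurableSet_noDominator _), measureReal_def, unifPi_noDominator,
    ENNReal.toReal_ofReal (by linarith)]
  ring

end Uniform

end PICD

/-- For i.i.d. uniform points on `(0,1)` with `r = 2`, `c = 1/2`, the domination
number minus one converges in distribution to `Bernoulli(4/9)`:
`P(γₙ = 2) → 4/9` and `P(γₙ = 1) → 5/9` as `n → ∞`. -/
theorem picd_domNum_limit_r2_chalf :
    Tendsto (fun n => (unifPi n {X | domNum n X (N01 2 (1/2)) = 2}).toReal)
        atTop (𝓝 (4/9)) ∧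
    Tendsto (fun n => (unifPi n {X | domNum n X (N01 2 (1/2)) = 1}).toReal)
        atTop (𝓝 (5/9)) := by
  have hq : Tendsto (fun m : ℕ => 16/9 * (1/4 : ℝ) ^ (m + 2)) atTop (𝓝 0) := by
    simpa using ((tendsto_add_atTop_iff_nat 2).2
      (tendsto_pow_atTop_nhds_zero_of_lt_one (by norm_num : (0 : ℝ) ≤ 1/4)
        (by norm_num))).const_mul (16/9 : ℝ)
  refine ⟨(tendsto_add_atTop_iff_nat 2).1 ?_, (tendsto_add_atTop_iff_nat 2).1 ?_⟩
  · simpa only [PICD.toReal_unifPi_domNum_eq_two, sub_zero] using tendsto_const_nhds.sub hq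
  · simpa only [PICD.toReal_unifPi_domNum_eq_one, add_zero] using tendsto_const_nhds.add hq
end

section
/- Suppose n points in (0,1) have minimum x₁ and maximum xₙ, r ≥ 1, c ∈ (0,1). If there exists a point of the sample in the set (xₙ/r, c] ∪ [c, (x₁ + r - 1)/r), then the domination number of the corresponding PICD equals 1. -/
open Set

/-- The parameterized proximity region on `(0,1)`, where at the center `x = c` the region is
(either of) the two defining intervals, formalized as their union. -/
noncomputable def N01c (r c x : ℝ) : Set ℝ :=
  (if x ≤ c then Set.Ioo (0:ℝ) (min 1 (r * x)) else ∅) ∪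
  (if c ≤ x then Set.Ioo (max 0 (1 - r * (1 - x))) 1 else ∅)

/-- If some sample point lies in the Γ₁-region
`(xₙ/r, c] ∪ [c, (x₁+r-1)/r)`, where `x₁` and `xₙ` are the sample minimum and maximum,
then the domination number of the PICD equals `1`. -/
theorem picd_domNum_eq_one_of_Gamma1 (n : ℕ) (hn : 1 ≤ n) (X : Fin n → ℝ)
    (hX : ∀ i, X i ∈ Set.Ioo (0:ℝ) 1) (r c : ℝ) (hr : 1 ≤ r)
    (hc : c ∈ Set.Ioo (0:ℝ) 1)
    (hΓ : ∃ i, X i ∈ Set.Ioc ((⨆ j, X j) / r) c ∪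
                Set.Ico c (((⨅ j, X j) + r - 1) / r)) :
    domNum n X (N01c r c) = 1 := by
  obtain ⟨i₀, hi₀⟩ := hΓ
  haveI : Nonempty (Fin n) := ⟨⟨0, hn⟩⟩
  have hr0 : (0:ℝ) < r := lt_of_lt_of_le one_pos hr
  have hbA : BddAbove (Set.range X) := (Set.finite_range X).bddAbove
  have hbB : BddBelow (Set.range X) := (Set.finite_range X).bddBelow
  have hdom : ∀ j, X j ∈ N01c r c (X i₀) := by
    intro j
    rcases hi₀ with h | h
    · have hle : X i₀ ≤ c := h.2
      have hmem : X j ∈ Set.Ioo (0:ℝ) (min 1 (r * X i₀)) := by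
        refine ⟨(hX j).1, lt_min (hX j).2 ?_⟩
        have h1 : X j ≤ ⨆ k, X k := le_ciSup hbA j
        have h2 : (⨆ k, X k) < X i₀ * r := (div_lt_iff₀ hr0).mp h.1
        nlinarith
      unfold N01c
      rw [if_pos hle]
      exact Set.mem_union_left _ hmem
    · have hge : c ≤ X i₀ := h.1
      have hmem : X j ∈ Set.Ioo (max 0 (1 - r * (1 - X i₀))) 1 := by
        refine ⟨max_lt (hX j).1 ?_, (hX j).2⟩
        have h1 : (⨅ k, X k) ≤ X j := ciInf_le hbB j
        have h2 : X i₀ * r < (⨅ k, X k) + r - 1 := (lt_div_iff₀ hr0).mp h.2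
        nlinarith
      unfold N01c
      rw [if_pos hge]
      exact Set.mem_union_right _ hmem
  have h1 : (1:ℕ) ∈ {k | ∃ S : Finset (Fin n), S.card = k ∧
      ∀ j, ∃ i ∈ S, X j = X i ∨ X j ∈ N01c r c (X i)} :=
    ⟨{i₀}, Finset.card_singleton _, fun j => ⟨i₀, Finset.mem_singleton_self _, Or.inr (hdom j)⟩⟩
  have h0 : ∀ k ∈ {k | ∃ S : Finset (Fin n), S.card = k ∧
      ∀ j, ∃ i ∈ S, X j = X i ∨ X j ∈ N01c r c (X i)}, 1 ≤ k := by
    rintro k ⟨S, hS, hSd⟩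
    rcases Nat.eq_zero_or_pos k with rfl | hk
    · exfalso
      obtain ⟨i, hi, -⟩ := hSd ⟨0, hn⟩
      rw [Finset.card_eq_zero] at hS
      simp [hS] at hi
    · exact hk
  exact le_antisymm (Nat.sInf_le h1) (le_csInf ⟨1, h1⟩ h0)
end

section
/- Let F have density f(x) = (π/2)|sin(2πx)| on (0,1), and c ∈ (0,1/2). Then for the PICD with parameters r = 1/(1-c) and centrality c built from n i.i.d. F points, lim_{n→∞} P(γₙ = 2) = 0; that is, the domination number converges in probability to 1. -/
/-!
Take `ε_n = n^(-3/4)`. If every sample point exceeds `ε_n` and some point `x` lies in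
`(c, c + (1-c)ε_n]`, then `N(x) = ((x-c)/(1-c), 1)` contains every sample point, so `γ_n = 1`.
The density vanishes like `π² x` at `0`, so some point falls below `ε_n` with probability at most
`π² n ε_n² → 0`; it is bounded below near `c`, so no point falls in `(c, c + (1-c)ε_n]` with
probability at most `exp (-K n ε_n) → 0` for some `K > 0`.
-/

open Set MeasureTheory Filter Topology Real

lemma N01_eq_Ioo {c x : ℝ} (hc : c < 1) (hx : c ≤ x) :
    N01 (1/(1-c)) c x = Ioo ((x - c) / (1 - c)) 1 := by
  have h1c : 0 < 1 - c := by linarith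
  have hleft : 1 - 1 / (1 - c) * (1 - x) = (x - c) / (1 - c) := by field_simp; ring
  rw [N01, if_neg (not_lt.2 hx), hleft, max_eq_right (div_nonneg (by linarith) h1c.le)]

lemma domNum_eq_one {n : ℕ} {X : Fin n → ℝ} {N : ℝ → Set ℝ} (i : Fin n)
    (hi : ∀ j, X j = X i ∨ X j ∈ N (X i)) : domNum n X N = 1 := by
  have hone : 1 ∈ {k | ∃ S : Finset (Fin n), S.card = k ∧ ∀ j, ∃ i ∈ S, X j = X i ∨ X j ∈ N (X i)} :=
    ⟨{i}, Finset.card_singleton i, fun j => ⟨i, Finset.mem_singleton_self i, hi j⟩⟩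
  refine le_antisymm (Nat.sInf_le hone) (le_csInf ⟨1, hone⟩ ?_)
  rintro k ⟨S, rfl, hS⟩
  obtain ⟨i', hi', -⟩ := hS i
  exact Finset.card_pos.2 ⟨i', hi'⟩

lemma domNum_N01_eq_one {c ε : ℝ} (hc : c < 1) {n : ℕ} {X : Fin n → ℝ}
    (hX : X ∈ univ.pi (fun _ => Ioo ε 1) \ univ.pi (fun _ => (Ioc c (c + (1 - c) * ε))ᶜ)) :
    domNum n X (N01 (1/(1-c)) c) = 1 := by
  obtain ⟨hG, hI⟩ := hX
  simp only [mem_univ_pi, mem_compl_iff, not_forall, not_not] at hG hI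
  obtain ⟨i, hic, hi⟩ := hI
  refine domNum_eq_one i fun j => Or.inr ?_
  rw [N01_eq_Ioo hc hic.le, mem_Ioo, div_lt_iff₀ (by linarith)]
  exact ⟨by nlinarith [(hG j).1], (hG j).2⟩

lemma measureReal_univ_pi_const {α : Type*} [MeasurableSpace α] (μ : Measure α)
    [SigmaFinite μ] (n : ℕ) (s : Set α) :
    (Measure.pi fun _ : Fin n => μ).real (univ.pi fun _ => s) = μ.real s ^ n := by
  simp [measureReal_def, Measure.pi_pi, ENNReal.toReal_pow]

/-- Union bound for "some point misses `G`" and independence for "no point hits `I`". -/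
lemma measureReal_pi_compl_diff_le {α : Type*} [MeasurableSpace α] (μ : Measure α)
    [IsProbabilityMeasure μ] {G I : Set α} (hG : MeasurableSet G) (hI : MeasurableSet I) (n : ℕ) :
    (Measure.pi fun _ : Fin n => μ).real (univ.pi (fun _ => G) \ univ.pi (fun _ => Iᶜ))ᶜ
      ≤ n * μ.real Gᶜ + exp (-(n * μ.real I)) := by
  have hGn : 1 - μ.real G ^ n ≤ n * μ.real Gᶜ := by
    have := one_add_mul_le_pow (a := μ.real G - 1) (by linarith [measureReal_nonneg (μ := μ) (s := G)]) n
    rw [add_sub_cancel] at this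
    rw [probReal_compl_eq_one_sub hG]
    linarith
  have hIn : (1 - μ.real I) ^ n ≤ exp (-(n * μ.real I)) := by
    rw [neg_mul_eq_mul_neg, exp_nat_mul]
    exact pow_le_pow_left₀ (by linarith [measureReal_le_one (μ := μ) (s := I)])
      (by linarith [add_one_le_exp (-μ.real I)]) n
  calc _ ≤ (Measure.pi fun _ : Fin n => μ).real (univ.pi fun _ => G)ᶜ
          + (Measure.pi fun _ : Fin n => μ).real (univ.pi fun _ => Iᶜ) := by
        rw [Set.compl_sdiff, union_comm]; exact measureReal_union_le _ _
    _ = (1 - μ.real G ^ n) + (1 - μ.real I) ^ n := by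
        rw [probReal_compl_eq_one_sub (MeasurableSet.univ_pi fun _ => hG),
          measureReal_univ_pi_const, measureReal_univ_pi_const, probReal_compl_eq_one_sub hI]
    _ ≤ _ := add_le_add hGn hIn

lemma tendsto_measureReal_pi_compl_diff {α : Type*} [MeasurableSpace α] (μ : Measure α)
    [IsProbabilityMeasure μ] {G I : ℕ → Set α} (hG : ∀ n, MeasurableSet (G n))
    (hI : ∀ n, MeasurableSet (I n)) (hGc : Tendsto (fun n : ℕ => n * μ.real (G n)ᶜ) atTop (𝓝 0))
    (hIn : Tendsto (fun n : ℕ => n * μ.real (I n)) atTop atTop) :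
    Tendsto (fun n => (Measure.pi fun _ : Fin n => μ).real
      (univ.pi (fun _ => G n) \ univ.pi (fun _ => (I n)ᶜ))ᶜ) atTop (𝓝 0) := by
  refine squeeze_zero (fun _ => measureReal_nonneg)
    (fun n => measureReal_pi_compl_diff_le μ (hG n) (hI n) n) ?_
  simpa using hGc.add (tendsto_exp_neg_atTop_nhds_zero.comp hIn)

lemma tendsto_measureReal_nhds_one_of_subset {Ω : ℕ → Type*} [∀ n, MeasurableSpace (Ω n)]
    {P : ∀ n, Measure (Ω n)} [∀ n, IsProbabilityMeasure (P n)] {E A : ∀ n, Set (Ω n)}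
    (hE : ∀ n, MeasurableSet (E n)) (hEA : ∀ n, E n ⊆ A n)
    (h : Tendsto (fun n => (P n).real (E n)ᶜ) atTop (𝓝 0)) :
    Tendsto (fun n => (P n).real (A n)) atTop (𝓝 1) := by
  refine tendsto_of_tendsto_of_tendsto_of_le_of_le (by simpa using tendsto_const_nhds.sub h)
    tendsto_const_nhds (fun n => ?_) (fun n => measureReal_le_one)
  rw [probReal_compl_eq_one_sub (hE n), sub_sub_cancel]
  exact measureReal_mono (hEA n)

noncomputable def sineMeasure : Measure ℝ :=
  volume.withDensity fun x =>
    ENNReal.ofReal (if x ∈ Set.Ioo (0:ℝ) 1 then (π/2) * |Real.sin (2*π*x)| else 0)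

lemma sineMeasure_apply {s : Set ℝ} (hs : MeasurableSet s) :
    sineMeasure s = ∫⁻ x in s ∩ Ioo 0 1, ENNReal.ofReal ((π/2) * |sin (2*π*x)|) := by
  have hind : (fun x => ENNReal.ofReal (if x ∈ Ioo (0:ℝ) 1 then (π/2) * |sin (2*π*x)| else 0))
      = (Ioo 0 1).indicator fun x => ENNReal.ofReal ((π/2) * |sin (2*π*x)|) := by
    funext x
    by_cases h : x ∈ Ioo (0:ℝ) 1 <;> simp [h]
  rw [sineMeasure, hind, withDensity_indicator measurableSet_Ioo, withDensity_apply _ hs,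
    Measure.restrict_restrict hs]

lemma integral_half_mul_abs_sin_two_pi_mul :
    ∫ x in (0:ℝ)..1, (π/2) * |sin (2*π*x)| = 1 := by
  have hper : Function.Periodic (fun x : ℝ => (π/2) * |sin (2*π*x)|) (1/2) := fun x => by
    show π/2 * |sin (2*π*(x + 1/2))| = π/2 * |sin (2*π*x)|
    rw [show 2*π*(x + 1/2) = 2*π*x + π by ring, sin_add_pi, abs_neg]
  have hhalf : ∫ x in (0:ℝ)..1/2, (π/2) * |sin (2*π*x)| = 1/2 := by
    have hsin : ∀ x ∈ uIcc (0:ℝ) (1/2), (π/2) * |sin (2*π*x)| = (π/2) * sin (2*π*x) := by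
      intro x hx
      rw [uIcc_of_le (by norm_num)] at hx
      rw [abs_of_nonneg (sin_nonneg_of_nonneg_of_le_pi (by nlinarith [pi_pos, hx.1])
        (by nlinarith [pi_pos, hx.2]))]
    rw [intervalIntegral.integral_congr hsin, intervalIntegral.integral_const_mul,
      intervalIntegral.integral_comp_mul_left sin (by positivity), integral_sin,
      mul_zero, cos_zero, show 2*π*(1/2) = π by ring, cos_pi, smul_eq_mul]
    field_simp
    ring
  have htwo := hper.intervalIntegral_add_zsmul_eq 2 0
    (fun a b => (by fun_prop : Continuous fun x : ℝ => (π/2) * |sin (2*π*x)|).intervalIntegrable a b)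
  rw [zero_add, zero_add, show ((2:ℤ) • (1/2:ℝ)) = 1 by norm_num, hhalf] at htwo
  rw [htwo]
  norm_num

instance : IsProbabilityMeasure sineMeasure := by
  constructor
  rw [sineMeasure_apply MeasurableSet.univ, univ_inter, ← ofReal_integral_eq_lintegral_ofReal
    ((by fun_prop : Continuous fun x : ℝ => (π/2) * |sin (2*π*x)|).integrableOn_Icc.mono_set
      Ioo_subset_Icc_self) (ae_of_all _ fun x => by positivity),
    ← integral_Ioc_eq_integral_Ioo, ← intervalIntegral.integral_of_le zero_le_one,
    integral_half_mul_abs_sin_two_pi_mul, ENNReal.ofReal_one]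

/-- Near `0` the density is at most `π² x`, since `|sin t| ≤ |t|`. -/
lemma sineMeasure_real_compl_Ioo_le {ε : ℝ} (hε : 0 ≤ ε) :
    sineMeasure.real (Ioo ε 1)ᶜ ≤ π^2 * ε^2 := by
  refine ENNReal.toReal_le_of_le_ofReal (by positivity) ?_
  have hsub : (Ioo ε 1)ᶜ ∩ Ioo 0 1 ⊆ Ioc 0 ε := by
    rintro x ⟨hx, hx0, hx1⟩
    exact ⟨hx0, not_lt.1 fun h => hx ⟨h, hx1⟩⟩
  have hbound : ∀ x ∈ Ioc (0:ℝ) ε, (π/2) * |sin (2*π*x)| ≤ π^2 * ε := by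
    rintro x ⟨hx0, hxε⟩
    have hsin : |sin (2*π*x)| ≤ 2*π*x := by
      simpa [abs_of_pos (by positivity : 0 < 2*π*x)] using abs_sin_le_abs (x := 2*π*x)
    nlinarith [pi_pos]
  rw [sineMeasure_apply measurableSet_Ioo.compl]
  calc _ ≤ ∫⁻ _ in Ioc 0 ε, ENNReal.ofReal (π^2 * ε) :=
        (lintegral_mono_set hsub).trans
          (setLIntegral_mono measurable_const fun x hx => ENNReal.ofReal_le_ofReal (hbound x hx))
    _ = ENNReal.ofReal (π^2 * ε^2) := by
        rw [setLIntegral_const, Real.volume_Ioc, ← ENNReal.ofReal_mul (by positivity)]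
        ring_nf

lemma min_sin_two_pi_mul_le {a b x : ℝ} (ha : 0 ≤ a) (hb : b ≤ 1/2) (hx : x ∈ Icc a b) :
    min (sin (2*π*a)) (sin (2*π*b)) ≤ sin (2*π*x) := by
  have hπ := pi_pos
  have hseg : 2*π*x ∈ segment ℝ (2*π*a) (2*π*b) := by
    rw [segment_eq_Icc (by nlinarith [hx.1, hx.2])]
    exact ⟨by nlinarith [hx.1], by nlinarith [hx.2]⟩
  exact strictConcaveOn_sin_Icc.concaveOn.ge_on_segment
    ⟨by positivity, by nlinarith [hx.1, hx.2]⟩ ⟨by nlinarith [hx.1, hx.2], by nlinarith⟩ hseg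

lemma le_sineMeasure_real_Ioc {a b s t : ℝ} (ha : 0 ≤ a) (hb : b ≤ 1/2) (has : a ≤ s)
    (hst : s ≤ t) (htb : t ≤ b) :
    π/2 * min (sin (2*π*a)) (sin (2*π*b)) * (t - s) ≤ sineMeasure.real (Ioc s t) := by
  have hπ := pi_pos
  have hmin : 0 ≤ π/2 * min (sin (2*π*a)) (sin (2*π*b)) :=
    mul_nonneg (by positivity) (le_min
      (sin_nonneg_of_nonneg_of_le_pi (by positivity) (by nlinarith))
      (sin_nonneg_of_nonneg_of_le_pi (by nlinarith) (by nlinarith)))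
  have hsub : Ioc s t ⊆ Ioo 0 1 := fun x hx => ⟨by linarith [hx.1], by linarith [hx.2]⟩
  refine (ENNReal.ofReal_le_iff_le_toReal (measure_ne_top _ _)).1 ?_
  rw [sineMeasure_apply measurableSet_Ioc, inter_eq_left.2 hsub]
  calc _ = ∫⁻ _ in Ioc s t, ENNReal.ofReal (π/2 * min (sin (2*π*a)) (sin (2*π*b))) := by
        rw [setLIntegral_const, Real.volume_Ioc, ENNReal.ofReal_mul hmin]
    _ ≤ _ := setLIntegral_mono (by fun_prop) fun x hx => ENNReal.ofReal_le_ofReal <|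
        (mul_le_mul_of_nonneg_left (min_sin_two_pi_mul_le ha hb ⟨by linarith [hx.1], hx.2.trans htb⟩)
          (by positivity)).trans (mul_le_mul_of_nonneg_left (le_abs_self _) (by positivity))

lemma natCast_mul_rpow_neg_pow {n : ℕ} (hn : 0 < n) (p : ℝ) (k : ℕ) :
    (n:ℝ) * ((n:ℝ) ^ (-p)) ^ k = (n:ℝ) ^ (1 - p * k) := by
  have hn' : (0:ℝ) < n := Nat.cast_pos.2 hn
  rw [← rpow_mul_natCast hn'.le, sub_eq_add_neg, rpow_add hn', rpow_one, neg_mul]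

lemma tendsto_natCast_mul_rpow_neg_sq {p : ℝ} (hp : 1/2 < p) :
    Tendsto (fun n : ℕ => (n:ℝ) * ((n:ℝ) ^ (-p)) ^ 2) atTop (𝓝 0) := by
  refine ((tendsto_rpow_neg_atTop (by linarith : 0 < 2 * p - 1)).comp
    tendsto_natCast_atTop_atTop).congr' ?_
  filter_upwards [eventually_gt_atTop 0] with n hn
  rw [Function.comp_apply, natCast_mul_rpow_neg_pow hn]
  ring_nf

lemma tendsto_natCast_mul_rpow_neg {p : ℝ} (hp : p < 1) :
    Tendsto (fun n : ℕ => (n:ℝ) * (n:ℝ) ^ (-p)) atTop atTop := by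
  refine ((tendsto_rpow_atTop (by linarith : 0 < 1 - p)).comp
    tendsto_natCast_atTop_atTop).congr' ?_
  filter_upwards [eventually_gt_atTop 0] with n hn
  rw [Function.comp_apply, ← pow_one ((n:ℝ) ^ (-p)), natCast_mul_rpow_neg_pow hn]
  ring_nf

/-- For any `b ∈ (c, 1/2)` the density is bounded below on `[c, b]`, so the interval
`(c, c + (1-c)ε]` has mass at least a constant times `ε` once `c + (1-c)ε ≤ b`. -/
lemma tendsto_sineMeasure_pi_compl {c : ℝ} (hc0 : 0 < c) (hc2 : c < 1/2) {ε : ℕ → ℝ}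
    (hε0 : ∀ n, 0 ≤ ε n) (hε : Tendsto ε atTop (𝓝 0))
    (hsq : Tendsto (fun n : ℕ => n * ε n ^ 2) atTop (𝓝 0))
    (hlin : Tendsto (fun n : ℕ => n * ε n) atTop atTop) :
    Tendsto (fun n => (Measure.pi fun _ : Fin n => sineMeasure).real
      (univ.pi (fun _ => Ioo (ε n) 1) \ univ.pi (fun _ => (Ioc c (c + (1 - c) * ε n))ᶜ))ᶜ)
      atTop (𝓝 0) := by
  have hπ := pi_pos
  obtain ⟨b, hcb, hb2⟩ := exists_between hc2
  set K := π/2 * min (sin (2*π*c)) (sin (2*π*b)) * (1 - c)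
  have hK : 0 < K := mul_pos (mul_pos (by positivity) (lt_min
    (sin_pos_of_pos_of_lt_pi (by positivity) (by nlinarith))
    (sin_pos_of_pos_of_lt_pi (by nlinarith) (by nlinarith)))) (by linarith)
  refine tendsto_measureReal_pi_compl_diff sineMeasure (fun _ => measurableSet_Ioo)
    (fun _ => measurableSet_Ioc) ?_ ?_
  · refine squeeze_zero (fun n => by positivity) (fun n => ?_) (by simpa using hsq.const_mul (π^2))
    calc (n:ℝ) * sineMeasure.real (Ioo (ε n) 1)ᶜ ≤ n * (π^2 * ε n ^ 2) :=
          mul_le_mul_of_nonneg_left (sineMeasure_real_compl_Ioo_le (hε0 n)) n.cast_nonneg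
      _ = π^2 * (n * ε n ^ 2) := by ring
  · refine tendsto_atTop_mono' atTop ?_ (hlin.const_mul_atTop hK)
    filter_upwards [hε.eventually (eventually_le_nhds (by
      apply div_pos <;> linarith : 0 < (b - c) / (1 - c)))] with n hn
    have hnb : c + (1 - c) * ε n ≤ b := by
      rw [le_div_iff₀ (by linarith)] at hn
      linarith
    calc K * (n * ε n) = n * (π/2 * min (sin (2*π*c)) (sin (2*π*b)) * (c + (1 - c) * ε n - c)) := by
          ring
      _ ≤ n * sineMeasure.real (Ioc c (c + (1 - c) * ε n)) :=
          mul_le_mul_of_nonneg_left (le_sineMeasure_real_Ioc hc0.le (by linarith) le_rfl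
            (le_add_of_nonneg_right (mul_nonneg (by linarith) (hε0 n))) hnb) n.cast_nonneg

/-- For the distribution with density `f(x) = (π/2)|sin(2πx)|` on `(0,1)` and
`c ∈ (0,1/2)`, the PICD with parameters `(1/(1-c), c)` satisfies `limₙ P(γₙ = 2) = 0`;
that is, the domination number converges in probability to `1`. -/
theorem picd_domNum_limit_sine_density (c : ℝ) (hc : c ∈ Set.Ioo (0:ℝ) (1/2)) :
    Tendsto
      (fun n =>
        ((Measure.pi fun _ : Fin n =>
            volume.withDensity fun x =>
              ENNReal.ofReal
                (if x ∈ Set.Ioo (0:ℝ) 1 then (π/2) * |Real.sin (2*π*x)| else 0))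
          {X | domNum n X (N01 (1/(1-c)) c) = 2}).toReal)
      atTop (𝓝 0) ∧
    Tendsto
      (fun n =>
        ((Measure.pi fun _ : Fin n =>
            volume.withDensity fun x =>
              ENNReal.ofReal
                (if x ∈ Set.Ioo (0:ℝ) 1 then (π/2) * |Real.sin (2*π*x)| else 0))
          {X | domNum n X (N01 (1/(1-c)) c) = 1}).toReal)
      atTop (𝓝 1) := by
  obtain ⟨hc0, hc2⟩ := hc
  show Tendsto (fun n => (Measure.pi fun _ : Fin n => sineMeasure).real _) atTop (𝓝 0) ∧
    Tendsto (fun n => (Measure.pi fun _ : Fin n => sineMeasure).real _) atTop (𝓝 1)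
  set ε : ℕ → ℝ := fun n => (n:ℝ) ^ (-(3/4:ℝ))
  set good : ∀ n, Set (Fin n → ℝ) := fun n =>
    univ.pi (fun _ => Ioo (ε n) 1) \ univ.pi (fun _ => (Ioc c (c + (1 - c) * ε n))ᶜ)
  have hgood : ∀ n, good n ⊆ {X | domNum n X (N01 (1/(1-c)) c) = 1} :=
    fun n X hX => domNum_N01_eq_one (by linarith) hX
  have hbad : Tendsto (fun n => (Measure.pi fun _ : Fin n => sineMeasure).real (good n)ᶜ)
      atTop (𝓝 0) :=
    tendsto_sineMeasure_pi_compl hc0 hc2 (fun n => by positivity)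
      ((tendsto_rpow_neg_atTop (by norm_num)).comp tendsto_natCast_atTop_atTop)
      (tendsto_natCast_mul_rpow_neg_sq (by norm_num)) (tendsto_natCast_mul_rpow_neg (by norm_num))
  refine ⟨squeeze_zero (fun _ => measureReal_nonneg) (fun n => ?_) hbad,
    tendsto_measureReal_nhds_one_of_subset
      (fun n => (MeasurableSet.univ_pi fun _ => measurableSet_Ioo).diff
        (MeasurableSet.univ_pi fun _ => measurableSet_Ioc.compl)) hgood hbad⟩
  exact measureReal_mono fun X (hX : _ = 2) hXgood =>
    absurd (hX.symm.trans (hgood n hXgood)) (by norm_num)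
end
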